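/- arXiv:math/0512141 — 10 statements merged into one kernel-verified Lean document; each statement's English description precedes it below -/
import Mathlib

section
/- Let F be a cumulative distribution function with hazard rate h on [t₀,∞). If t·h(t) → ∞ as t → ∞, then for every a with 0 < a < 1, F̄(t)/F̄(at) → 0 as t → ∞; consequently, for any 0 < a < b, F̄(t/a)/F̄(t/b) → 0 as t → ∞ (the tail F̄ is rapidly varying). -/
open MeasureTheory Filter Set

noncomputable section

/-- `h` is a hazard rate for the upper tail of `F` on `[t₀, ∞)`:
`F̄(t₀) > 0`, `h` is nonnegative and locally integrable on `[t₀, ∞)`, and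
`F̄(t) = F̄(t₀) · exp(−∫_{t₀}^t h(u) du)` for all `t ≥ t₀`. -/
def HasHazardRate (F h : ℝ → ℝ) (t₀ : ℝ) : Prop :=
  0 < 1 - F t₀ ∧ (∀ t, t₀ ≤ t → 0 ≤ h t) ∧
    MeasureTheory.LocallyIntegrableOn h (Set.Ici t₀) ∧
    ∀ t, t₀ ≤ t → 1 - F t = (1 - F t₀) * Real.exp (-(∫ u in t₀..t, h u))

/-- `g`, positive on a neighborhood of `∞`, is regularly varying of index `ρ`:
for every `a > 0`, `g(at)/g(t) → a^ρ` as `t → ∞`. -/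
def RegularlyVarying (g : ℝ → ℝ) (ρ : ℝ) : Prop :=
  (∀ᶠ t in Filter.atTop, 0 < g t) ∧
    ∀ a : ℝ, 0 < a →
      Filter.Tendsto (fun t => g (a * t) / g t) Filter.atTop (nhds (a ^ ρ))

/-- `g` is smoothly varying of index `α` and order `m`: `g` is `m` times continuously
differentiable on a neighborhood of `∞` and `g^(m)` is regularly varying of index `α − m`. -/
def SmoothlyVarying (g : ℝ → ℝ) (α : ℝ) (m : ℕ) : Prop :=
  (∃ T : ℝ, ContDiffOn ℝ (m : ℕ∞) g (Set.Ici T)) ∧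
    RegularlyVarying (iteratedDeriv m g) (α - m)

/-- Condition (BasicH): `h` is regularly varying of some index, `t·h(t) → ∞`
and `h(t) → 0` as `t → ∞`. -/
def BasicH (h : ℝ → ℝ) : Prop :=
  (∃ ρ : ℝ, RegularlyVarying h ρ) ∧
    Filter.Tendsto (fun t => t * h t) Filter.atTop Filter.atTop ∧
    Filter.Tendsto h Filter.atTop (nhds 0)

/-- `F` is a cumulative distribution function on `ℝ`. -/
def IsCDF (F : ℝ → ℝ) : Prop :=
  Monotone F ∧ (∀ x, ContinuousWithinAt F (Set.Ici x) x) ∧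
    Filter.Tendsto F Filter.atBot (nhds 0) ∧ Filter.Tendsto F Filter.atTop (nhds 1)

/-!
The ratio `F̄(t) / F̄(a t)` equals `exp (-∫_{at}^t h)`. Once `u h(u) ≥ C` on `[at, t]`,
this integral is at least `∫_{at}^t C/u = C log (1/a)`, and `C` can be taken arbitrarily large.
The second claim is the first one with `a / b` in place of `a`, evaluated at `t / a`.
-/

theorem MeasureTheory.LocallyIntegrableOn.intervalIntegrable_of_ordConnected
    {f : ℝ → ℝ} {μ : Measure ℝ} {s : Set ℝ} {x y : ℝ}
    (hf : LocallyIntegrableOn f s μ) (hs : s.OrdConnected) (hx : x ∈ s) (hy : y ∈ s) :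
    IntervalIntegrable f μ x y :=
  (hf.integrableOn_compact_subset (hs.uIcc_subset hx hy) isCompact_uIcc).intervalIntegrable

theorem mul_log_div_le_integral_of_le_mul {h : ℝ → ℝ} {c s t : ℝ} (hs : 0 < s) (hst : s ≤ t)
    (hint : IntervalIntegrable h volume s t) (hc : ∀ u ∈ Icc s t, c ≤ u * h u) :
    c * Real.log (t / s) ≤ ∫ u in s..t, h u := by
  have hpos : ∀ u ∈ Icc s t, 0 < u := fun u hu => hs.trans_le hu.1
  calc c * Real.log (t / s) = ∫ u in s..t, c * u⁻¹ := by
        rw [intervalIntegral.integral_const_mul, integral_inv_of_pos hs (hs.trans_le hst)]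
    _ ≤ ∫ u in s..t, h u := by
        refine intervalIntegral.integral_mono_on hst
          ((intervalIntegral.intervalIntegrable_inv
            (fun u hu => (hpos u (by rwa [uIcc_of_le hst] at hu)).ne')
            continuousOn_id).const_mul c) hint fun u hu => ?_
        rw [← div_eq_mul_inv, div_le_iff₀ (hpos u hu), mul_comm]
        exact hc u hu

theorem tendsto_intervalIntegral_mul_atTop {h : ℝ → ℝ} {t₀ a : ℝ}
    (hloc : LocallyIntegrableOn h (Ici t₀)) (hth : Tendsto (fun t => t * h t) atTop atTop)
    (ha : 0 < a) (ha1 : a < 1) :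
    Tendsto (fun t => ∫ u in a * t..t, h u) atTop atTop := by
  have hlog : 0 < Real.log a⁻¹ := Real.log_pos ((one_lt_inv₀ ha).2 ha1)
  rw [tendsto_atTop]
  intro M
  obtain ⟨T, hT⟩ := eventually_atTop.1 (tendsto_atTop.1 hth (M / Real.log a⁻¹))
  filter_upwards [eventually_ge_atTop (max (max T t₀) 1 / a)] with t ht
  have hat : max (max T t₀) 1 ≤ a * t := (div_le_iff₀' ha).1 ht
  have hat_pos : 0 < a * t := by linarith [le_max_right (max T t₀) 1]
  have ht_pos : 0 < t := pos_of_mul_pos_right hat_pos ha.le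
  have hle : a * t ≤ t := mul_le_of_le_one_left ht_pos.le ha1.le
  have hint : IntervalIntegrable h volume (a * t) t :=
    hloc.intervalIntegrable_of_ordConnected ordConnected_Ici
      (by simp only [mem_Ici]; grind) (by simp only [mem_Ici]; grind)
  calc M = M / Real.log a⁻¹ * Real.log (t / (a * t)) := by
        rw [div_mul_cancel_right₀ ht_pos.ne', div_mul_cancel₀ _ hlog.ne']
    _ ≤ ∫ u in a * t..t, h u :=
        mul_log_div_le_integral_of_le_mul hat_pos hle hint fun u hu => hT u (by grind)

namespace HasHazardRate

variable {F h : ℝ → ℝ} {t₀ : ℝ}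

theorem tail_div_tail_eq (hh : HasHazardRate F h t₀) {s t : ℝ} (hs : t₀ ≤ s) (ht : t₀ ≤ t) :
    (1 - F t) / (1 - F s) = Real.exp (-∫ u in s..t, h u) := by
  obtain ⟨hpos, -, hloc, heq⟩ := hh
  have hint : ∀ x, t₀ ≤ x → IntervalIntegrable h volume t₀ x := fun x hx =>
    hloc.intervalIntegrable_of_ordConnected ordConnected_Ici self_mem_Ici hx
  rw [heq t ht, heq s hs, mul_div_mul_left _ _ hpos.ne', ← Real.exp_sub,
    ← intervalIntegral.integral_interval_sub_left (hint t ht) (hint s hs)]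
  ring_nf

theorem tendsto_tail_div_tail_mul (hh : HasHazardRate F h t₀)
    (hth : Tendsto (fun t => t * h t) atTop atTop) {a : ℝ} (ha : 0 < a) (ha1 : a < 1) :
    Tendsto (fun t => (1 - F t) / (1 - F (a * t))) atTop (nhds 0) := by
  refine (Real.tendsto_exp_neg_atTop_nhds_zero.comp
    (tendsto_intervalIntegral_mul_atTop hh.2.2.1 hth ha ha1)).congr' ?_
  filter_upwards [eventually_ge_atTop (t₀ / a), eventually_ge_atTop t₀] with t hta ht
  exact (hh.tail_div_tail_eq ((div_le_iff₀' ha).1 hta) ht).symm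

end HasHazardRate

theorem stmt_4_general (F h : ℝ → ℝ) (t₀ : ℝ)
    (hh : HasHazardRate F h t₀)
    (hth : Filter.Tendsto (fun t => t * h t) Filter.atTop Filter.atTop) :
    (∀ a : ℝ, 0 < a → a < 1 →
      Filter.Tendsto (fun t => (1 - F t) / (1 - F (a * t))) Filter.atTop (nhds 0)) ∧
    (∀ a b : ℝ, 0 < a → a < b →
      Filter.Tendsto (fun t => (1 - F (t / a)) / (1 - F (t / b))) Filter.atTop (nhds 0)) := by
  refine ⟨fun a ha ha1 => hh.tendsto_tail_div_tail_mul hth ha ha1, fun a b ha hab => ?_⟩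
  have hb : 0 < b := ha.trans hab
  refine ((hh.tendsto_tail_div_tail_mul hth (div_pos ha hb) ((div_lt_one hb).2 hab)).comp
    (tendsto_id.atTop_div_const ha)).congr fun t => ?_
  simp only [Function.comp_apply, id]
  rw [show a / b * (t / a) = t / b by field_simp]

/-- if `t·h(t) → ∞` then the tail `F̄` is rapidly varying. -/
theorem stmt_4 (F h : ℝ → ℝ) (t₀ : ℝ) (hF : IsCDF F)
    (hh : HasHazardRate F h t₀)
    (hth : Filter.Tendsto (fun t => t * h t) Filter.atTop Filter.atTop) :
    (∀ a : ℝ, 0 < a → a < 1 →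
      Filter.Tendsto (fun t => (1 - F t) / (1 - F (a * t))) Filter.atTop (nhds 0)) ∧
    (∀ a b : ℝ, 0 < a → a < b →
      Filter.Tendsto (fun t => (1 - F (t / a)) / (1 - F (t / b))) Filter.atTop (nhds 0)) :=
  stmt_4_general F h t₀ hh hth
end
end

section
/- Let F be a cumulative distribution function on ℝ whose upper tail has hazard rate h on [t₀,∞) (i.e. F̄(t) = F̄(t₀)·exp(−∫_{t₀}^t h(u)du) for t ≥ t₀, F̄(t₀) > 0) and whose lower tail has hazard rate h₋ on [t₀,∞) (i.e. F(−t) = F(−t₀)·exp(−∫_{t₀}^t h₋(u)du) for t ≥ t₀, F(−t₀) > 0). Assume F is tail balanced: F̄(t)/F(−t) converges to a positive finite limit as t → ∞. Then ∫_{t₀}^t (h(u) − h₋(u))du has a finite limit as t → ∞; and if in addition h is regularly varying of index β > −1 and h₋ is regularly varying of index β′ > −1, then h(t)/h₋(t) → 1 as t → ∞. -/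
open MeasureTheory Filter Set

noncomputable section

/-- `h₋` is a hazard rate for the lower tail of `F` on `[t₀, ∞)`:
`F(−t₀) > 0` and `F(−t) = F(−t₀) · exp(−∫_{t₀}^t h₋(u) du)` for all `t ≥ t₀`. -/
def HasLowerHazardRate (F hm : ℝ → ℝ) (t₀ : ℝ) : Prop :=
  0 < F (-t₀) ∧ (∀ t, t₀ ≤ t → 0 ≤ hm t) ∧
    MeasureTheory.LocallyIntegrableOn hm (Set.Ici t₀) ∧
    ∀ t, t₀ ≤ t → F (-t) = F (-t₀) * Real.exp (-(∫ u in t₀..t, hm u))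

open scoped Topology

/-!
Taking logarithms in the two hazard-rate representations gives
`∫_{t₀}^t (h - h₋) = -log (F̄(t) / F(-t) · F(-t₀) / F̄(t₀))`, which converges by tail balance;
hence `∫_t^{at} (h - h₋) → 0` for every `a > 1`.

For the second claim, Karamata's theorem `∫_t^{at} h ~ t h(t) ∫_1^a s^β ds` (a consequence of the
uniform convergence theorem for regularly varying functions, itself a consequence of Egorov's
theorem) together with `t h₋(t) → ∞` (a regularly varying function of index `β' + 1 > 0`) turns
this into `h(t) / h₋(t) → ∫_1^a s^β' ds / ∫_1^a s^β ds`. This limit does not depend on `a`, and letting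
`a → 1` shows that it is `1`.
-/

theorem MeasureTheory.exists_tendstoUniformlyOn_compl_of_ae_tendsto {α : Type*}
    [MeasurableSpace α] {μ : Measure α} [IsFiniteMeasure μ] {f : ℕ → α → ℝ} {g : α → ℝ}
    (hf : ∀ n, AEStronglyMeasurable (f n) μ) (hg : StronglyMeasurable g)
    (hfg : ∀ᵐ x ∂μ, Tendsto (fun n => f n x) atTop (𝓝 (g x))) {ε : ℝ} (hε : 0 < ε) :
    ∃ N, μ N ≤ ENNReal.ofReal ε ∧ TendstoUniformlyOn f g atTop Nᶜ := by
  have hmk : ∀ᵐ x ∂μ, ∀ n, f n x = (hf n).mk (f n) x := ae_all_iff.2 fun n => (hf n).ae_eq_mk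
  obtain ⟨N, -, hN, hunif⟩ :=
    tendstoUniformlyOn_of_ae_tendsto' (fun n => (hf n).stronglyMeasurable_mk) hg
      (by filter_upwards [hfg, hmk] with x hx hxmk; simpa only [← hxmk] using hx) hε
  obtain ⟨Z, hZ, -, hZ0⟩ := exists_measurable_superset_of_null (ae_iff.1 hmk)
  refine ⟨N ∪ Z, (measure_union_le N Z).trans (by rw [hZ0, add_zero]; exact hN), ?_⟩
  refine (hunif.mono (compl_subset_compl.2 subset_union_left)).congr
    (Eventually.of_forall fun n x hx => ?_)
  by_contra hne
  exact hx (Or.inr (hZ fun h => hne (h n).symm))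

theorem TendstoUniformlyOn.tendsto_comp_of_const {ι α β : Type*} [UniformSpace β]
    {F : ι → α → β} {c : β} {p : Filter ι} {s : Set α}
    (h : TendstoUniformlyOn F (fun _ => c) p s) {x : ι → α} (hx : ∀ᶠ n in p, x n ∈ s) :
    Tendsto (fun n => F n (x n)) p (𝓝 c) :=
  Uniform.tendsto_nhds_right.2 <|
    (tendstoUniformlyOn_iff_tendsto.1 h).comp (tendsto_id.prodMk (tendsto_principal.2 hx))

theorem TendstoUniformlyOn.tendsto_intervalIntegral_of_le {ι : Type*} {l : Filter ι}
    {F : ι → ℝ → ℝ} {f : ℝ → ℝ} {a b : ℝ} (hab : a ≤ b)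
    (hF : ∀ᶠ i in l, IntervalIntegrable (F i) volume a b) (hf : IntervalIntegrable f volume a b)
    (h : TendstoUniformlyOn F f l (Icc a b)) :
    Tendsto (fun i => ∫ x in a..b, F i x) l (𝓝 (∫ x in a..b, f x)) := by
  refine Metric.tendsto_nhds.2 fun ε hε => ?_
  have hδ : 0 < ε / (b - a + 1) := div_pos hε (by linarith)
  filter_upwards [hF, Metric.tendstoUniformlyOn_iff.1 h _ hδ] with i hi hclose
  rw [dist_eq_norm, ← intervalIntegral.integral_sub hi hf]
  calc ‖∫ x in a..b, (F i x - f x)‖ ≤ ε / (b - a + 1) * |b - a| := by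
        refine intervalIntegral.norm_integral_le_of_norm_le_const fun x hx => ?_
        rw [uIoc_of_le hab] at hx
        rw [← dist_eq_norm, dist_comm]
        exact (hclose x (Ioc_subset_Icc_self hx)).le
    _ < ε := by
        rw [abs_of_nonneg (sub_nonneg.2 hab), div_mul_eq_mul_div, div_lt_iff₀ (by linarith)]
        nlinarith

theorem Real.quasiMeasurePreserving_mul_const {c : ℝ} (hc : c ≠ 0) :
    Measure.QuasiMeasurePreserving (· * c) volume volume :=
  ⟨measurable_mul_const c, by
    rw [Real.map_volume_mul_right hc]; exact Measure.smul_absolutelyContinuous⟩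

theorem MeasureTheory.AEStronglyMeasurable.comp_mul_const_Icc {g : ℝ → ℝ} {T c M : ℝ}
    (hg : AEStronglyMeasurable g (volume.restrict (Ici T))) (hc : 0 < c) (hTc : T ≤ c) :
    AEStronglyMeasurable (fun v => g (v * c)) (volume.restrict (Icc 1 M)) :=
  hg.comp_quasiMeasurePreserving <| (Real.quasiMeasurePreserving_mul_const hc.ne').restrict
    fun _ hv => hTc.trans (le_mul_of_one_le_left hc.le hv.1)

theorem MeasureTheory.LocallyIntegrableOn.intervalIntegrable_of_le {f : ℝ → ℝ} {T x y : ℝ}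
    (hf : LocallyIntegrableOn f (Ici T)) (hx : T ≤ x) (hxy : x ≤ y) :
    IntervalIntegrable f volume x y :=
  (intervalIntegrable_iff_integrableOn_Icc_of_le hxy).2 <|
    hf.integrableOn_compact_subset (fun _ hz => hx.trans hz.1) isCompact_Icc

theorem exists_mem_Icc_notMem_of_volume_lt {N₁ N₂ : Set ℝ} {s M : ℝ} (hs : 0 < s)
    (h : volume N₁ + ENNReal.ofReal s * volume N₂ < ENNReal.ofReal (M - s)) :
    ∃ σ ∈ Icc s M, σ ∉ N₁ ∧ σ / s ∉ N₂ := by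
  set bad := N₁ ∪ (· * s⁻¹) ⁻¹' N₂
  have hpre : volume ((· * s⁻¹) ⁻¹' N₂) = ENNReal.ofReal s * volume N₂ := by
    rw [Real.volume_preimage_mul_right (inv_ne_zero hs.ne'), inv_inv, abs_of_pos hs]
  have hbad : volume bad < volume (Icc s M) := by
    rw [Real.volume_Icc]
    exact (measure_union_le _ _).trans_lt (hpre ▸ h)
  have hgood : 0 < volume (Icc s M \ bad) := (tsub_pos_of_lt hbad).trans_le le_measure_sdiff
  obtain ⟨σ, hσ, hσbad⟩ := nonempty_of_measure_ne_zero hgood.ne'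
  exact ⟨σ, hσ, fun h => hσbad (Or.inl h), fun h => hσbad (Or.inr h)⟩

theorem tendsto_atTop_of_le_mul_of_le_mul {g : ℝ → ℝ} {A T : ℝ} (hA : 1 < A) (hT : 0 < T)
    (hgT : 0 < g T) (hgrow : ∀ t, T ≤ t → 2 * g t ≤ g (A * t))
    (hwin : ∀ t, T ≤ t → ∀ s ∈ Icc 1 A, g t / 2 ≤ g (s * t)) :
    Tendsto g atTop atTop := by
  have hA0 : 0 < A := zero_lt_one.trans hA
  have hblock : ∀ n : ℕ, ∀ x ∈ Icc (A ^ n * T) (A ^ (n + 1) * T), 2 ^ n * (g T / 2) ≤ g x := by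
    intro n
    induction n with
    | zero =>
      intro x hx
      simpa [div_mul_cancel₀ x hT.ne'] using hwin T le_rfl (x / T)
        ⟨(one_le_div hT).2 (by simpa using hx.1), (div_le_iff₀ hT).2 (by simpa using hx.2)⟩
    | succ n ih =>
      intro x hx
      have hy : x / A ∈ Icc (A ^ n * T) (A ^ (n + 1) * T) := by
        refine ⟨(le_div_iff₀ hA0).2 ?_, (div_le_iff₀ hA0).2 ?_⟩
        · convert hx.1 using 1; ring
        · convert hx.2 using 1; ring
      have hTy : T ≤ x / A := (le_mul_of_one_le_left hT.le (one_le_pow₀ hA.le)).trans hy.1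
      calc 2 ^ (n + 1) * (g T / 2) = 2 * (2 ^ n * (g T / 2)) := by ring
        _ ≤ 2 * g (x / A) := by linarith [ih _ hy]
        _ ≤ g (A * (x / A)) := hgrow _ hTy
        _ = g x := by rw [mul_div_cancel₀ x hA0.ne']
  refine tendsto_atTop.2 fun b => ?_
  obtain ⟨N, hN⟩ := pow_unbounded_of_one_lt (b / (g T / 2)) one_lt_two
  filter_upwards [eventually_ge_atTop (A ^ N * T)] with x hx
  obtain ⟨n, hn, hn'⟩ := exists_nat_pow_near
    ((one_le_div hT).2 ((le_mul_of_one_le_left hT.le (one_le_pow₀ hA.le)).trans hx)) hA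
  have hNn : N ≤ n := Nat.lt_succ_iff.1 <|
    (pow_lt_pow_iff_right₀ hA).1 (((le_div_iff₀ hT).2 hx).trans_lt hn')
  calc b ≤ 2 ^ N * (g T / 2) := by rw [div_lt_iff₀ (by positivity)] at hN; linarith
    _ ≤ 2 ^ n * (g T / 2) := by gcongr; norm_num
    _ ≤ g x := hblock n x ⟨(le_div_iff₀ hT).1 hn, ((div_lt_iff₀ hT).1 hn').le⟩

theorem tendsto_integral_rpow_div_integral_rpow (β γ : ℝ) :
    Tendsto (fun a => (∫ s in (1 : ℝ)..a, s ^ γ) / ∫ s in (1 : ℝ)..a, s ^ β) (𝓝[≠] 1)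
      (𝓝 1) := by
  have hslope : ∀ β : ℝ,
      Tendsto (fun a => (∫ s in (1 : ℝ)..a, s ^ β) / (a - 1)) (𝓝[≠] 1) (𝓝 1) := by
    intro β
    have hd : HasDerivAt (fun a => ∫ s in (1 : ℝ)..a, s ^ β) ((1 : ℝ) ^ β) 1 :=
      intervalIntegral.integral_hasDerivAt_right (by simp)
        (measurable_id.pow_const β).stronglyMeasurable.stronglyMeasurableAtFilter
        (Real.continuousAt_rpow_const 1 β (Or.inl one_ne_zero))
    rw [Real.one_rpow, hasDerivAt_iff_tendsto_slope] at hd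
    refine hd.congr fun a => ?_
    simp [slope_def_field]
  have hquot := (hslope γ).div (hslope β) one_ne_zero
  rw [div_one] at hquot
  refine hquot.congr' ?_
  filter_upwards [self_mem_nhdsWithin] with a ha
  exact div_div_div_cancel_right₀ (sub_ne_zero.2 ha) _ _

namespace RegularlyVarying

variable {g : ℝ → ℝ} {β T : ℝ}

theorem tendsto_div_div_rpow (hg : RegularlyVarying g β) {s : ℝ} (hs : 0 < s) :
    Tendsto (fun t => g (s * t) / g t / s ^ β) atTop (𝓝 1) := by
  simpa [div_self (Real.rpow_pos_of_pos hs β).ne'] using (hg.2 s hs).div_const (s ^ β)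

theorem id_mul (hg : RegularlyVarying g β) : RegularlyVarying (fun t => t * g t) (β + 1) := by
  refine ⟨(eventually_gt_atTop 0).and hg.1 |>.mono fun t ht => mul_pos ht.1 ht.2, fun a ha => ?_⟩
  rw [Real.rpow_add_one ha.ne', mul_comm (a ^ β)]
  refine ((hg.2 a ha).const_mul a).congr' ?_
  filter_upwards [eventually_gt_atTop 0] with t ht
  field_simp

theorem exists_tendstoUniformlyOn_seq (hg : RegularlyVarying g β)
    (hmeas : AEStronglyMeasurable g (volume.restrict (Ici T))) {τ : ℕ → ℝ}
    (hτ : Tendsto τ atTop atTop) (hτpos : ∀ n, 0 < τ n) (hτT : ∀ n, T ≤ τ n) (M : ℝ) :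
    ∃ N, volume N ≤ ENNReal.ofReal (1 / 2) ∧
      TendstoUniformlyOn (fun n v => g (v * τ n) / g (τ n) / v ^ β) (fun _ => 1) atTop
        (Icc 1 M \ N) := by
  obtain ⟨N, hN, hunif⟩ := exists_tendstoUniformlyOn_compl_of_ae_tendsto
    (μ := volume.restrict (Icc 1 M))
    (fun n => ((hmeas.comp_mul_const_Icc (hτpos n) (hτT n)).div₀
      aestronglyMeasurable_const).div₀ (measurable_id.pow_const β).aestronglyMeasurable)
    stronglyMeasurable_const
    ((ae_restrict_iff' measurableSet_Icc).2 <| Eventually.of_forall fun v hv =>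
      (hg.tendsto_div_div_rpow (zero_lt_one.trans_le hv.1)).comp hτ)
    one_half_pos
  refine ⟨N ∩ Icc 1 M, ?_, hunif.mono fun v hv hvN => hv.2 ⟨hvN, hv.1⟩⟩
  rwa [← Measure.restrict_apply' measurableSet_Icc]

/-- With `v = σ / s`, the normalized ratio at scale `s` is the one at scale `σ` divided by the one
at scale `v` taken from the base point `s t`; a measure count finds `σ` with `σ` and `v` outside
the exceptional sets of Egorov's theorem for both base-point sequences. -/
theorem tendsto_div_div_rpow_seq (hg : RegularlyVarying g β)
    (hmeas : AEStronglyMeasurable g (volume.restrict (Ici T))) {τ s : ℕ → ℝ}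
    (hτ : Tendsto τ atTop atTop) (hτpos : ∀ n, 0 < τ n) (hτT : ∀ n, T ≤ τ n) {A : ℝ}
    (hs : ∀ n, s n ∈ Icc 1 A) :
    Tendsto (fun n => g (s n * τ n) / g (τ n) / s n ^ β) atTop (𝓝 1) := by
  have hs0 : ∀ n, 0 < s n := fun n => zero_lt_one.trans_le (hs n).1
  have hτs : ∀ n, τ n ≤ s n * τ n := fun n => le_mul_of_one_le_left (hτpos n).le (hs n).1
  obtain ⟨N₁, hN₁, hunif₁⟩ := hg.exists_tendstoUniformlyOn_seq hmeas hτ hτpos hτT (2 * A + 1)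
  obtain ⟨N₂, hN₂, hunif₂⟩ := hg.exists_tendstoUniformlyOn_seq hmeas
    (tendsto_atTop_mono hτs hτ) (fun n => mul_pos (hs0 n) (hτpos n))
    (fun n => (hτT n).trans (hτs n)) (2 * A + 1)
  have hgood : ∀ n, ∃ σ ∈ Icc (s n) (2 * A + 1), σ ∉ N₁ ∧ σ / s n ∉ N₂ := fun n => by
    obtain ⟨hs1, hsA⟩ := hs n
    refine exists_mem_Icc_notMem_of_volume_lt (hs0 n) ?_
    calc volume N₁ + ENNReal.ofReal (s n) * volume N₂
        ≤ ENNReal.ofReal (1 / 2) + ENNReal.ofReal (s n) * ENNReal.ofReal (1 / 2) := by gcongr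
      _ = ENNReal.ofReal (1 / 2 + s n / 2) := by
        rw [← ENNReal.ofReal_mul (hs0 n).le, ← ENNReal.ofReal_add (by norm_num) (by linarith)]
        ring_nf
      _ < ENNReal.ofReal (2 * A + 1 - s n) := by
        rw [ENNReal.ofReal_lt_ofReal_iff (by linarith)]
        linarith
  choose σ hσ hσN₁ hσN₂ using hgood
  have hσ1 : ∀ n, 1 ≤ σ n := fun n => (hs n).1.trans (hσ n).1
  have h₁ := hunif₁.tendsto_comp_of_const (x := σ) (Eventually.of_forall fun n =>
    ⟨⟨hσ1 n, (hσ n).2⟩, hσN₁ n⟩)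
  have h₂ := hunif₂.tendsto_comp_of_const (x := fun n => σ n / s n) (Eventually.of_forall fun n =>
    ⟨⟨(one_le_div (hs0 n)).2 (hσ n).1,
      (div_le_self (zero_le_one.trans (hσ1 n)) (hs n).1).trans (hσ n).2⟩, hσN₂ n⟩)
  have hpos : ∀ᶠ n in atTop, 0 < g (τ n) ∧ 0 < g (s n * τ n) ∧ 0 < g (σ n * τ n) := by
    have hστ : ∀ n, τ n ≤ σ n * τ n := fun n => le_mul_of_one_le_left (hτpos n).le (hσ1 n)
    exact (hτ.eventually hg.1).and <| ((tendsto_atTop_mono hτs hτ).eventually hg.1).and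
      ((tendsto_atTop_mono hστ hτ).eventually hg.1)
  have hquot := h₁.div h₂ one_ne_zero
  rw [div_one] at hquot
  refine hquot.congr' ?_
  filter_upwards [hpos] with n ⟨hg₁, hg₂, hg₃⟩
  have hσs : σ n / s n * (s n * τ n) = σ n * τ n := by field_simp [(hs0 n).ne']
  have hsβ := Real.rpow_pos_of_pos (hs0 n) β
  have hσβ := Real.rpow_pos_of_pos (zero_lt_one.trans_le (hσ1 n)) β
  simp only [Pi.div_apply]
  rw [hσs, Real.div_rpow (zero_le_one.trans (hσ1 n)) (hs0 n).le]
  field_simp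

theorem tendstoUniformlyOn (hg : RegularlyVarying g β)
    (hmeas : AEStronglyMeasurable g (volume.restrict (Ici T))) (A : ℝ) :
    TendstoUniformlyOn (fun t s => g (s * t) / g t) (fun s => s ^ β) atTop (Icc 1 A) := by
  rw [Metric.tendstoUniformlyOn_iff]
  by_contra! hbad
  obtain ⟨ε, hε, hfreq⟩ := hbad
  have hseq : ∀ n : ℕ, ∃ t, max (n : ℝ) (max T 1) ≤ t ∧
      ∃ s ∈ Icc 1 A, ε ≤ dist (s ^ β) (g (s * t) / g t) := fun n =>
    (frequently_atTop.1 (not_eventually.1 hfreq) _).imp fun _ ht =>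
      ⟨ht.1, by simpa [and_assoc] using ht.2⟩
  choose τ hτ s hs hεs using hseq
  have hτ1 : ∀ n, 1 ≤ τ n := fun n => (le_max_right _ _).trans ((le_max_right _ _).trans (hτ n))
  have hτtop : Tendsto τ atTop atTop :=
    tendsto_atTop_mono (fun n => (le_max_left _ _).trans (hτ n)) tendsto_natCast_atTop_atTop
  have hρ := hg.tendsto_div_div_rpow_seq hmeas hτtop (fun n => zero_lt_one.trans_le (hτ1 n))
    (fun n => (le_max_left _ _).trans ((le_max_right _ _).trans (hτ n))) hs
  have hlim : Tendsto (fun n => A ^ |β| * |1 - g (s n * τ n) / g (τ n) / s n ^ β|) atTop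
      (𝓝 0) := by
    simpa using ((tendsto_const_nhds (x := (1 : ℝ))).sub hρ).abs.const_mul (A ^ |β|)
  have hdist : Tendsto (fun n => dist (s n ^ β) (g (s n * τ n) / g (τ n))) atTop (𝓝 0) := by
    refine squeeze_zero (fun _ => dist_nonneg) (fun n => ?_) hlim
    have hs0 : 0 < s n := zero_lt_one.trans_le (hs n).1
    have hsβ : 0 < s n ^ β := Real.rpow_pos_of_pos hs0 β
    calc dist (s n ^ β) (g (s n * τ n) / g (τ n))
        = s n ^ β * |1 - g (s n * τ n) / g (τ n) / s n ^ β| := by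
          rw [Real.dist_eq, ← abs_of_pos hsβ, ← abs_mul, abs_of_pos hsβ, mul_sub, mul_one,
            mul_div_cancel₀ _ hsβ.ne']
      _ ≤ A ^ |β| * |1 - g (s n * τ n) / g (τ n) / s n ^ β| := by
          gcongr
          exact (Real.rpow_le_rpow_of_exponent_le (hs n).1 (le_abs_self β)).trans
            (Real.rpow_le_rpow hs0.le (hs n).2 (abs_nonneg β))
  obtain ⟨n, hn⟩ := (hdist.eventually (gt_mem_nhds hε)).exists
  exact (hεs n).not_gt hn

theorem tendsto_atTop (hg : RegularlyVarying g β) (hβ : 0 < β)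
    (hmeas : AEStronglyMeasurable g (volume.restrict (Ici T))) : Tendsto g atTop atTop := by
  set A : ℝ := 3 ^ β⁻¹
  have hA : 1 < A := Real.one_lt_rpow (by norm_num) (inv_pos.2 hβ)
  have hAβ : A ^ β = 3 := by
    rw [← Real.rpow_mul (by norm_num), inv_mul_cancel₀ hβ.ne', Real.rpow_one]
  obtain ⟨T₁, hT₁⟩ := eventually_atTop.1 <|
    (Metric.tendstoUniformlyOn_iff.1 (hg.tendstoUniformlyOn hmeas A) (1 / 2) one_half_pos).and
      (hg.1.and (eventually_ge_atTop 1))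
  have hratio : ∀ t, T₁ ≤ t → ∀ s ∈ Icc 1 A, s ^ β - 1 / 2 < g (s * t) / g t :=
    fun t ht s hs => by linarith [abs_lt.1 (Real.dist_eq _ _ ▸ (hT₁ t ht).1 s hs)]
  refine tendsto_atTop_of_le_mul_of_le_mul hA (zero_lt_one.trans_le (hT₁ T₁ le_rfl).2.2)
    (hT₁ T₁ le_rfl).2.1 (fun t ht => ?_) (fun t ht s hs => ?_)
  · have := hratio t ht A ⟨hA.le, le_rfl⟩
    rw [hAβ, lt_div_iff₀ (hT₁ t ht).2.1] at this
    linarith [(hT₁ t ht).2.1]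
  · have := hratio t ht s hs
    rw [lt_div_iff₀ (hT₁ t ht).2.1] at this
    nlinarith [Real.one_le_rpow hs.1 hβ.le, (hT₁ t ht).2.1]

theorem tendsto_integral_div (hg : RegularlyVarying g β) (hloc : LocallyIntegrableOn g (Ici T))
    {a : ℝ} (ha : 1 ≤ a) :
    Tendsto (fun t => (∫ u in t..a * t, g u) / (t * g t)) atTop
      (𝓝 (∫ s in (1 : ℝ)..a, s ^ β)) := by
  have hint : ∀ᶠ t in atTop, IntervalIntegrable (fun s => g (s * t) / g t) volume 1 a := by
    filter_upwards [eventually_ge_atTop T, eventually_gt_atTop 0] with t hT ht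
    have := (hloc.intervalIntegrable_of_le hT (le_mul_of_one_le_left ht.le ha)).comp_mul_right
      (c := t)
    simpa [ht.ne'] using this.div_const (g t)
  have hrpow : IntervalIntegrable (fun s : ℝ => s ^ β) volume 1 a :=
    intervalIntegral.intervalIntegrable_rpow
      (Or.inr (notMem_uIcc_of_lt one_pos (one_pos.trans_le ha)))
  refine ((hg.tendstoUniformlyOn hloc.aestronglyMeasurable a).tendsto_intervalIntegral_of_le ha
    hint hrpow).congr' ?_
  filter_upwards [eventually_gt_atTop 0] with t ht
  rw [intervalIntegral.integral_div, intervalIntegral.integral_comp_mul_right _ ht.ne', one_mul,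
    smul_eq_mul]
  field_simp

theorem tendsto_div_of_tendsto_integral_sub {f₁ f₂ : ℝ → ℝ} {β₁ β₂ T : ℝ}
    (h₁ : RegularlyVarying f₁ β₁) (h₂ : RegularlyVarying f₂ β₂) (hβ₂ : -1 < β₂)
    (hloc₁ : LocallyIntegrableOn f₁ (Ici T)) (hloc₂ : LocallyIntegrableOn f₂ (Ici T))
    (hsub : ∀ a, 1 < a → Tendsto (fun t => ∫ u in t..a * t, (f₁ u - f₂ u)) atTop (𝓝 0)) :
    Tendsto (fun t => f₁ t / f₂ t) atTop (𝓝 1) := by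
  set K : ℝ → ℝ → ℝ := fun β a => ∫ s in (1 : ℝ)..a, s ^ β
  have hKpos : ∀ β a, 1 < a → 0 < K β a := fun β a ha =>
    intervalIntegral.intervalIntegral_pos_of_pos_on
      (intervalIntegral.intervalIntegrable_rpow
        (Or.inr (notMem_uIcc_of_lt one_pos (one_pos.trans ha))))
      (fun x hx => Real.rpow_pos_of_pos (one_pos.trans hx.1) β) ha
  have hgrowth : Tendsto (fun t => t * f₂ t) atTop atTop :=
    h₂.id_mul.tendsto_atTop (by linarith) (aestronglyMeasurable_id.mul hloc₂.aestronglyMeasurable)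
  have hlim : ∀ a, 1 < a → Tendsto (fun t => f₁ t / f₂ t) atTop (𝓝 (K β₂ a / K β₁ a)) := by
    intro a ha
    have hnum : Tendsto (fun t => (∫ u in t..a * t, f₁ u) / (t * f₂ t)) atTop (𝓝 (K β₂ a)) := by
      have := ((hsub a ha).div_atTop hgrowth).add (h₂.tendsto_integral_div hloc₂ ha.le)
      rw [zero_add] at this
      refine this.congr' ?_
      filter_upwards [eventually_ge_atTop T, eventually_ge_atTop 0] with t hT ht
      have hat : t ≤ a * t := le_mul_of_one_le_left ht ha.le
      rw [← add_div, intervalIntegral.integral_sub (hloc₁.intervalIntegrable_of_le hT hat)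
        (hloc₂.intervalIntegrable_of_le hT hat), sub_add_cancel]
    have hden := h₁.tendsto_integral_div hloc₁ ha.le
    refine (hnum.div hden (hKpos β₁ a ha).ne').congr' ?_
    filter_upwards [h₁.1, h₂.1, eventually_gt_atTop 0, hden.eventually_ne (hKpos β₁ a ha).ne']
      with t hf₁ hf₂ ht hI
    have hI' : ∫ u in t..a * t, f₁ u ≠ 0 := fun h0 => hI (by rw [h0, zero_div])
    simp only [Pi.div_apply]
    field_simp
  have hconst : ∀ a, 1 < a → K β₂ a / K β₁ a = K β₂ 2 / K β₁ 2 := fun a ha =>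
    tendsto_nhds_unique (hlim a ha) (hlim 2 one_lt_two)
  have hone : K β₂ 2 / K β₁ 2 = 1 := by
    refine tendsto_nhds_unique (l := 𝓝[>] (1 : ℝ)) tendsto_const_nhds
      (((tendsto_integral_rpow_div_integral_rpow β₁ β₂).mono_left
        (nhdsWithin_mono _ fun a ha => ne_of_gt ha)).congr' ?_)
    filter_upwards [self_mem_nhdsWithin] with a ha using hconst a ha
  exact hone ▸ hlim 2 one_lt_two

end RegularlyVarying

theorem tendsto_integral_mul_of_tendsto_integral {f : ℝ → ℝ} {T l a : ℝ}
    (hf : LocallyIntegrableOn f (Ici T)) (ha : 0 < a)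
    (hlim : Tendsto (fun t => ∫ u in T..t, f u) atTop (𝓝 l)) :
    Tendsto (fun t => ∫ u in t..a * t, f u) atTop (𝓝 0) := by
  have hat : Tendsto (fun t => a * t) atTop atTop := tendsto_id.const_mul_atTop ha
  have hdiff := (hlim.comp hat).sub hlim
  rw [sub_self] at hdiff
  refine hdiff.congr' ?_
  filter_upwards [eventually_ge_atTop T, hat.eventually_ge_atTop T] with t ht hat
  exact intervalIntegral.integral_interval_sub_left (hf.intervalIntegrable_of_le le_rfl hat)
    (hf.intervalIntegrable_of_le le_rfl ht)

theorem integral_sub_eq_neg_log_of_hazardRate {F h hm : ℝ → ℝ} {t₀ t : ℝ}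
    (hup : HasHazardRate F h t₀) (hlow : HasLowerHazardRate F hm t₀) (ht : t₀ ≤ t) :
    ∫ u in t₀..t, (h u - hm u) = -Real.log ((1 - F t) / F (-t) * (F (-t₀) / (1 - F t₀))) := by
  obtain ⟨hF₀, -, hloc, hrep⟩ := hup
  obtain ⟨hF₀', -, hloc', hrep'⟩ := hlow
  have hratio : (1 - F t) / F (-t) * (F (-t₀) / (1 - F t₀)) =
      Real.exp ((∫ u in t₀..t, hm u) - ∫ u in t₀..t, h u) := by
    rw [hrep t ht, hrep' t ht, Real.exp_sub, Real.exp_neg, Real.exp_neg]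
    field_simp
  rw [intervalIntegral.integral_sub (hloc.intervalIntegrable_of_le le_rfl ht)
    (hloc'.intervalIntegrable_of_le le_rfl ht), hratio, Real.log_exp, neg_sub]

theorem tendsto_integral_sub_of_hazardRate {F h hm : ℝ → ℝ} {t₀ L : ℝ}
    (hup : HasHazardRate F h t₀) (hlow : HasLowerHazardRate F hm t₀) (hL : 0 < L)
    (hbal : Tendsto (fun t => (1 - F t) / F (-t)) atTop (𝓝 L)) :
    Tendsto (fun t => ∫ u in t₀..t, (h u - hm u)) atTop
      (𝓝 (-Real.log (L * (F (-t₀) / (1 - F t₀))))) := by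
  refine ((hbal.mul_const _).log (mul_pos hL (div_pos hlow.1 hup.1)).ne').neg.congr' ?_
  filter_upwards [eventually_ge_atTop t₀] with t ht
  exact (integral_sub_eq_neg_log_of_hazardRate hup hlow ht).symm

theorem stmt_5_general (F h hm : ℝ → ℝ) (t₀ : ℝ)
    (hup : HasHazardRate F h t₀)
    (hlow : HasLowerHazardRate F hm t₀)
    (hbal : ∃ L : ℝ, 0 < L ∧
      Filter.Tendsto (fun t => (1 - F t) / F (-t)) Filter.atTop (nhds L)) :
    (∃ l : ℝ, Filter.Tendsto (fun t => ∫ u in t₀..t, (h u - hm u)) Filter.atTop (nhds l)) ∧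
    (∀ β β' : ℝ, -1 < β → -1 < β' → RegularlyVarying h β → RegularlyVarying hm β' →
      Filter.Tendsto (fun t => h t / hm t) Filter.atTop (nhds 1)) := by
  obtain ⟨L, hL, hbal⟩ := hbal
  have hlim := tendsto_integral_sub_of_hazardRate hup hlow hL hbal
  refine ⟨⟨_, hlim⟩, fun β β' _ hβ' hh hhm => ?_⟩
  exact hh.tendsto_div_of_tendsto_integral_sub hhm hβ' hup.2.2.1 hlow.2.2.1 fun a ha =>
    tendsto_integral_mul_of_tendsto_integral (hup.2.2.1.sub hlow.2.2.1) (one_pos.trans ha) hlim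

/-- for a tail-balanced `F`, `∫_{t₀}^t (h − h₋)` has a finite limit, and if
`h`, `h₋` are regularly varying of indices `> −1` then `h(t)/h₋(t) → 1`. -/
theorem stmt_5 (F h hm : ℝ → ℝ) (t₀ : ℝ) (hF : IsCDF F)
    (hup : HasHazardRate F h t₀)
    (hlow : HasLowerHazardRate F hm t₀)
    (hbal : ∃ L : ℝ, 0 < L ∧
      Filter.Tendsto (fun t => (1 - F t) / F (-t)) Filter.atTop (nhds L)) :
    (∃ l : ℝ, Filter.Tendsto (fun t => ∫ u in t₀..t, (h u - hm u)) Filter.atTop (nhds l)) ∧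
    (∀ β β' : ℝ, -1 < β → -1 < β' → RegularlyVarying h β → RegularlyVarying hm β' →
      Filter.Tendsto (fun t => h t / hm t) Filter.atTop (nhds 1)) :=
  stmt_5_general F h hm t₀ hup hlow hbal
end
end

section
/- Let H and K be cumulative distribution functions on ℝ and let H⋆K denote their convolution (the distribution function of X+Y where X, Y are independent with distributions H and K). Then for every real t, 1 − (H⋆K)(t) = ∫_{(−∞, t/2]} H̄(t−x) dK(x) + ∫_{(−∞, t/2]} K̄(t−x) dH(x) + H̄(t/2)·K̄(t/2), where H̄(s) = P(X > s) and K̄(s) = P(Y > s) denote the (strict) tail functions and the integrals are Lebesgue–Stieltjes integrals over the closed half-line (−∞, t/2]. -/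
/-!
Split the event `{x + y > t}` according to which coordinate is `≤ t / 2`: at most one of them
can be, and if neither is, both exceed `t / 2`. The three pieces are disjoint; Tonelli in
either order computes the first two and the third is a rectangle.
-/

open MeasureTheory Set

lemma preimage_add_Ioi_eq_union (t : ℝ) :
    (fun p : ℝ × ℝ => p.1 + p.2) ⁻¹' Ioi t
      = {p | p.2 ∈ Iic (t / 2) ∧ t - p.2 < p.1} ∪ {p | p.1 ∈ Iic (t / 2) ∧ t - p.1 < p.2}
        ∪ Ioi (t / 2) ×ˢ Ioi (t / 2) := by
  ext ⟨x, y⟩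
  simp only [mem_preimage, mem_Ioi, mem_Iic, mem_union, mem_ofPred_eq, mem_prod]
  constructor
  · intro h
    by_cases hy : y ≤ t / 2
    · exact .inl (.inl ⟨hy, by linarith⟩)
    by_cases hx : x ≤ t / 2
    · exact .inl (.inr ⟨hx, by linarith⟩)
    exact .inr ⟨by linarith, by linarith⟩
  · rintro ((⟨-, h⟩ | ⟨-, h⟩) | ⟨hx, hy⟩) <;> linarith

lemma measurableSet_setOf_fst_mem_sub_fst_lt_snd {s : Set ℝ} (hs : MeasurableSet s) (t : ℝ) :
    MeasurableSet {p : ℝ × ℝ | p.1 ∈ s ∧ t - p.1 < p.2} :=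
  (measurable_fst hs).inter (measurableSet_lt (measurable_const.sub measurable_fst) measurable_snd)

namespace MeasureTheory.Measure

variable (ρ σ : Measure ℝ) {s : Set ℝ} (t : ℝ)

lemma prod_setOf_fst_mem_sub_fst_lt_snd [SFinite σ] (hs : MeasurableSet s) :
    ρ.prod σ {p | p.1 ∈ s ∧ t - p.1 < p.2} = ∫⁻ x in s, σ (Ioi (t - x)) ∂ρ := by
  rw [prod_apply (measurableSet_setOf_fst_mem_sub_fst_lt_snd hs t), ← lintegral_indicator hs]
  congr 1 with x
  by_cases hx : x ∈ s <;> simp [hx, indicator, ← Ioi_def]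

lemma prod_setOf_snd_mem_sub_snd_lt_fst [SFinite ρ] [SFinite σ] (hs : MeasurableSet s) :
    ρ.prod σ {p | p.2 ∈ s ∧ t - p.2 < p.1} = ∫⁻ y in s, ρ (Ioi (t - y)) ∂σ := by
  have hmeas : MeasurableSet {p : ℝ × ℝ | p.2 ∈ s ∧ t - p.2 < p.1} :=
    (measurableSet_setOf_fst_mem_sub_fst_lt_snd hs t).preimage measurable_swap
  rw [← prod_swap, map_apply measurable_swap hmeas]
  exact prod_setOf_fst_mem_sub_fst_lt_snd σ ρ t hs

lemma map_add_prod_Ioi [SFinite ρ] [SFinite σ] :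
    (ρ.prod σ).map (fun p : ℝ × ℝ => p.1 + p.2) (Ioi t)
      = (∫⁻ y in Iic (t / 2), ρ (Ioi (t - y)) ∂σ) + (∫⁻ x in Iic (t / 2), σ (Ioi (t - x)) ∂ρ)
        + ρ (Ioi (t / 2)) * σ (Ioi (t / 2)) := by
  have hdisj₁ : Disjoint {p : ℝ × ℝ | p.2 ∈ Iic (t / 2) ∧ t - p.2 < p.1}
      {p | p.1 ∈ Iic (t / 2) ∧ t - p.1 < p.2} := by
    rw [disjoint_left]
    rintro ⟨x, y⟩ ⟨hy, -⟩ ⟨hx, h⟩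
    simp only [mem_Iic] at hx hy
    linarith
  have hdisj₂ : Disjoint ({p : ℝ × ℝ | p.2 ∈ Iic (t / 2) ∧ t - p.2 < p.1}
      ∪ {p | p.1 ∈ Iic (t / 2) ∧ t - p.1 < p.2}) (Ioi (t / 2) ×ˢ Ioi (t / 2)) := by
    rw [disjoint_left]
    rintro ⟨x, y⟩ (⟨h, -⟩ | ⟨h, -⟩) ⟨hx, hy⟩ <;> simp only [mem_Iic, mem_Ioi] at * <;> linarith
  rw [map_apply (by fun_prop) measurableSet_Ioi, preimage_add_Ioi_eq_union,
    measure_union hdisj₂ (measurableSet_Ioi.prod measurableSet_Ioi),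
    measure_union hdisj₁ (measurableSet_setOf_fst_mem_sub_fst_lt_snd measurableSet_Iic t),
    prod_setOf_snd_mem_sub_snd_lt_fst ρ σ t measurableSet_Iic,
    prod_setOf_fst_mem_sub_fst_lt_snd ρ σ t measurableSet_Iic, prod_prod]

end MeasureTheory.Measure

lemma integral_measure_Ioi_sub_toReal (ρ σ : Measure ℝ) [IsFiniteMeasure σ] (s : Set ℝ) (t : ℝ) :
    ∫ x in s, (σ (Ioi (t - x))).toReal ∂ρ = (∫⁻ x in s, σ (Ioi (t - x)) ∂ρ).toReal := by
  have hmono : Monotone fun x => σ (Ioi (t - x)) := fun a b hab =>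
    measure_mono (Ioi_subset_Ioi (by linarith))
  exact integral_toReal hmono.measurable.aemeasurable (.of_forall fun _ => measure_lt_top _ _)

/-- tail decomposition of a convolution. For probability measures `μ` (law of
`X`, distribution function `H`) and `ν` (law of `Y`, distribution function `K`),
`1 − (H⋆K)(t) = P(X+Y > t)` equals
`∫_{(−∞,t/2]} H̄(t−x) dK(x) + ∫_{(−∞,t/2]} K̄(t−x) dH(x) + H̄(t/2)·K̄(t/2)`. -/
theorem stmt_6 (μ ν : Measure ℝ) [IsProbabilityMeasure μ] [IsProbabilityMeasure ν] (t : ℝ) :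
    ((Measure.map (fun p : ℝ × ℝ => p.1 + p.2) (μ.prod ν)) (Set.Ioi t)).toReal
      = (∫ x in Set.Iic (t / 2), (μ (Set.Ioi (t - x))).toReal ∂ν)
        + (∫ x in Set.Iic (t / 2), (ν (Set.Ioi (t - x))).toReal ∂μ)
        + (μ (Set.Ioi (t / 2))).toReal * (ν (Set.Ioi (t / 2))).toReal := by
  have hfin := measure_ne_top ((μ.prod ν).map fun p : ℝ × ℝ => p.1 + p.2) (Ioi t)
  rw [Measure.map_add_prod_Ioi] at hfin ⊢
  obtain ⟨hfin₁₂, hfin₃⟩ := ENNReal.add_ne_top.1 hfin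
  obtain ⟨hfin₁, hfin₂⟩ := ENNReal.add_ne_top.1 hfin₁₂
  rw [ENNReal.toReal_add hfin₁₂ hfin₃, ENNReal.toReal_add hfin₁ hfin₂, ENNReal.toReal_mul,
    integral_measure_Ioi_sub_toReal, integral_measure_Ioi_sub_toReal]
end

section
/- Let F be a cumulative distribution function with hazard rate h on [t₀,∞), and assume t·h(t) → ∞ as t → ∞. Then for every positive number M there exists t₁ such that for all t ≥ t₁ and all λ ≥ 1, F̄(λt)/F̄(t) ≤ λ^{−M}. -/
open MeasureTheory Filter Set

noncomputable section

/-- Potter-type bound: if `t·h(t) → ∞`, then for every `M > 0` there is `t₁`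
such that `F̄(λt)/F̄(t) ≤ λ^(−M)` for all `t ≥ t₁` and `λ ≥ 1`. -/
theorem stmt_8 (F h : ℝ → ℝ) (t₀ : ℝ) (hF : IsCDF F)
    (hh : HasHazardRate F h t₀)
    (hth : Filter.Tendsto (fun t => t * h t) Filter.atTop Filter.atTop) :
    ∀ M : ℝ, 0 < M → ∃ t₁ : ℝ, ∀ t, t₁ ≤ t → ∀ lam : ℝ, 1 ≤ lam →
      (1 - F (lam * t)) / (1 - F t) ≤ lam ^ (-M) := by
  intro M hM
  obtain ⟨hpos, hnn, hloc, heq⟩ := hh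
  obtain ⟨T, hT⟩ := Filter.eventually_atTop.mp (hth.eventually_ge_atTop M)
  refine ⟨max T (max t₀ 1), fun t ht lam hlam => ?_⟩
  have hTt : T ≤ t := le_trans (le_max_left _ _) ht
  have ht0 : t₀ ≤ t := le_trans (le_trans (le_max_left _ _) (le_max_right _ _)) ht
  have ht1 : (1 : ℝ) ≤ t := le_trans (le_trans (le_max_right _ _) (le_max_right _ _)) ht
  have htpos : 0 < t := lt_of_lt_of_le one_pos ht1
  have hlampos : 0 < lam := lt_of_lt_of_le one_pos hlam
  have hlt : t ≤ lam * t := le_mul_of_one_le_left htpos.le hlam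
  have ht0' : t₀ ≤ lam * t := le_trans ht0 hlt
  -- integrability of h on intervals within Ici t₀
  have hint : ∀ a b : ℝ, t₀ ≤ a → t₀ ≤ b → IntervalIntegrable h MeasureTheory.volume a b := by
    intro a b ha hb
    rw [intervalIntegrable_iff]
    have hsub : Set.uIcc a b ⊆ Set.Ici t₀ := by
      rw [Set.uIcc]
      exact fun x hx => le_trans (le_inf ha hb) hx.1
    exact (hloc.integrableOn_compact_subset hsub isCompact_uIcc).mono_set Set.Ioc_subset_Icc_self
  have hI1 := hint t₀ t le_rfl ht0
  have hI2 := hint t (lam * t) ht0 ht0'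
  -- lower bound on the integral over [t, lam*t]
  have hcmp : M * Real.log lam ≤ ∫ u in t..(lam * t), h u := by
    have hInv : IntervalIntegrable (fun u => M / u) MeasureTheory.volume t (lam * t) := by
      apply ContinuousOn.intervalIntegrable
      apply ContinuousOn.div continuousOn_const continuousOn_id
      intro x hx
      rw [Set.uIcc_of_le hlt] at hx
      exact ne_of_gt (lt_of_lt_of_le htpos hx.1)
    have hmono : (∫ u in t..(lam * t), M / u) ≤ ∫ u in t..(lam * t), h u := by
      apply intervalIntegral.integral_mono_on hlt hInv hI2
      intro u hu
      have hu0 : 0 < u := lt_of_lt_of_le htpos hu.1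
      rw [div_le_iff₀ hu0]
      calc M ≤ u * h u := hT u (le_trans hTt hu.1)
        _ = h u * u := mul_comm _ _
    have hcalc : (∫ u in t..(lam * t), M / u) = M * Real.log lam := by
      simp only [div_eq_mul_inv]
      rw [intervalIntegral.integral_const_mul, integral_inv_of_pos htpos (by positivity)]
      rw [mul_div_assoc, div_self htpos.ne', mul_one]
    linarith [hmono, hcalc ▸ hmono]
  -- rewrite the ratio
  have hratio : (1 - F (lam * t)) / (1 - F t)
      = Real.exp (-(∫ u in t..(lam * t), h u)) := by
    rw [heq t ht0, heq (lam * t) ht0',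
      ← intervalIntegral.integral_add_adjacent_intervals hI1 hI2]
    rw [mul_div_mul_left _ _ (ne_of_gt hpos), ← Real.exp_sub]
    congr 1
    ring
  rw [hratio, Real.rpow_def_of_pos hlampos]
  apply Real.exp_le_exp.mpr
  have : Real.log lam * -M = -(M * Real.log lam) := by ring
  rw [this]
  linarith
end
end

section
/- Let F be a cumulative distribution function with hazard rate h on [t₀,∞). Assume condition (BasicH) holds for h and that h is smoothly varying of index α−1 and order m for some m ≥ 1 and some α < 1. Then there exist positive numbers t₁ and M such that for every t ≥ t₁, the function x ↦ F̄(t−x)·F̄(x) is nonincreasing on the interval [M, t/2]. -/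
open MeasureTheory Filter Set

noncomputable section

/-!
Write `F̄ = F̄(t₀) e^{-H}` with `H(s) = ∫_{t₀}^s h`. For `M ≤ x ≤ y ≤ t/2` the product
`F̄(t-x) F̄(x)` does not increase from `x` to `y` as soon as `∫_{t-y}^{t-x} h ≤ ∫_x^y h`, and this
holds once `h` is nonincreasing on `[M, ∞)`, because then `h(t-u) ≤ h(u)` for `u ≤ t/2`.

That `h` is eventually nonincreasing comes from `h^(m) > 0` and `h → 0`: by downward induction,
`(-1)^i h^(m-i)` is eventually positive. Indeed, if `σ h^(j+1) > 0` eventually, then `σ h^(j)` is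
eventually increasing; were it not eventually negative, it would stay above some `c > 0`, and
integrating `j` times would drive `σ h` to infinity. Since `h ≥ 0`, the case `i = m` forces
`m` to be even, and then the case `i = m - 1` says `h' < 0` eventually.
-/

open Topology

lemma tendsto_atTop_of_eventually_hasDerivAt_of_const_le {f f' : ℝ → ℝ} {c : ℝ} (hc : 0 < c)
    (hf : ∀ᶠ x in atTop, HasDerivAt f (f' x) x) (hf' : ∀ᶠ x in atTop, c ≤ f' x) :
    Tendsto f atTop atTop := by
  obtain ⟨a, ha⟩ := eventually_atTop.1 (hf.and hf')
  have hgrowth : MonotoneOn (fun x => f x - c * x) (Ici a) := by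
    refine monotoneOn_of_hasDerivWithinAt_nonneg (f' := fun x => f' x - c) (convex_Ici a)
      (fun x hx => ((ha x hx).1.sub (hasDerivAt_const_mul c)).continuousAt.continuousWithinAt)
      (fun x hx => ?_) (fun x hx => ?_) <;> rw [interior_Ici] at hx
    · exact ((ha x hx.le).1.sub (hasDerivAt_const_mul c)).hasDerivWithinAt
    · linarith [(ha x hx.le).2]
  have hlin : Tendsto (fun x => f a - c * a + c * x) atTop atTop :=
    tendsto_atTop_add_const_left _ _ (tendsto_id.const_mul_atTop hc)
  refine tendsto_atTop_mono' _ ?_ hlin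
  filter_upwards [eventually_ge_atTop a] with x hx
  linarith [hgrowth self_mem_Ici hx hx]

lemma exists_strictMonoOn_Ici_of_eventually_hasDerivAt_pos {f f' : ℝ → ℝ}
    (hf : ∀ᶠ x in atTop, HasDerivAt f (f' x) x) (hf' : ∀ᶠ x in atTop, 0 < f' x) :
    ∃ a, StrictMonoOn f (Ici a) := by
  obtain ⟨a, ha⟩ := eventually_atTop.1 (hf.and hf')
  refine ⟨a, strictMonoOn_of_hasDerivWithinAt_pos (f' := f') (convex_Ici a)
    (fun x hx => (ha x hx).1.continuousAt.continuousWithinAt) ?_ ?_⟩ <;> rw [interior_Ici] <;>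
    intro x hx
  · exact (ha x hx.le).1.hasDerivWithinAt
  · exact (ha x hx.le).2

section DerivativeChain

variable {g : ℕ → ℝ → ℝ} {n : ℕ}

lemma not_eventually_const_le_mul_of_hasDerivAt_chain
    (hg : ∀ j < n, ∀ᶠ x in atTop, HasDerivAt (g j) (g (j + 1) x) x)
    (hg0 : Tendsto (g 0) atTop (𝓝 0)) (σ : ℝ) :
    ∀ j ≤ n, ∀ c, 0 < c → ¬ ∀ᶠ x in atTop, c ≤ σ * g j x := by
  intro j
  induction j with
  | zero =>
    intro _ c hc hle
    have hlt : ∀ᶠ x in atTop, σ * g 0 x < c :=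
      (by simpa using hg0.const_mul σ : Tendsto (fun x => σ * g 0 x) atTop (𝓝 0)).eventually
        (gt_mem_nhds hc)
    obtain ⟨x, hle, hlt⟩ := (hle.and hlt).exists
    linarith
  | succ j ih =>
    intro hj c hc hle
    have hσg : Tendsto (fun x => σ * g j x) atTop atTop :=
      tendsto_atTop_of_eventually_hasDerivAt_of_const_le hc
        ((hg j hj).mono fun x hx => hx.const_mul σ) hle
    exact ih (by omega) 1 one_pos (hσg.eventually_ge_atTop 1)

lemma eventually_neg_of_hasDerivAt_chain
    (hg : ∀ j < n, ∀ᶠ x in atTop, HasDerivAt (g j) (g (j + 1) x) x)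
    (hg0 : Tendsto (g 0) atTop (𝓝 0)) {j : ℕ} (hj : j < n) {σ : ℝ}
    (hpos : ∀ᶠ x in atTop, 0 < σ * g (j + 1) x) :
    ∀ᶠ x in atTop, σ * g j x < 0 := by
  obtain ⟨a, hmono⟩ := exists_strictMonoOn_Ici_of_eventually_hasDerivAt_pos
    ((hg j hj).mono fun x hx => hx.const_mul σ) hpos
  filter_upwards [eventually_ge_atTop a] with x hx
  by_contra! hnonneg
  refine not_eventually_const_le_mul_of_hasDerivAt_chain hg hg0 σ j hj.le _
    (hnonneg.trans_lt (hmono hx (mem_Ici.2 (by linarith)) (lt_add_one x))) ?_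
  filter_upwards [eventually_ge_atTop (x + 1)] with y hy
  exact hmono.monotoneOn (mem_Ici.2 (by linarith)) (mem_Ici.2 (by linarith)) hy

lemma eventually_neg_one_pow_mul_pos_of_hasDerivAt_chain
    (hg : ∀ j < n, ∀ᶠ x in atTop, HasDerivAt (g j) (g (j + 1) x) x)
    (hg0 : Tendsto (g 0) atTop (𝓝 0)) (hgn : ∀ᶠ x in atTop, 0 < g n x) :
    ∀ i ≤ n, ∀ᶠ x in atTop, 0 < (-1) ^ i * g (n - i) x := by
  intro i
  induction i with
  | zero => simpa using hgn
  | succ i ih =>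
    intro hi
    have hsucc : n - i = n - (i + 1) + 1 := by omega
    have hpos := ih (by omega)
    rw [hsucc] at hpos
    filter_upwards [eventually_neg_of_hasDerivAt_chain hg hg0 (by omega) hpos] with x hx
    rw [pow_succ]
    linarith

end DerivativeChain

lemma ContDiffOn.eventually_hasDerivAt_iteratedDeriv {f : ℝ → ℝ} {T : ℝ} {m j : ℕ}
    (hf : ContDiffOn ℝ m f (Ici T)) (hj : j < m) :
    ∀ᶠ x in atTop, HasDerivAt (iteratedDeriv j f) (iteratedDeriv (j + 1) f x) x := by
  filter_upwards [eventually_gt_atTop T] with x hx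
  have hdiff : DifferentiableAt ℝ (iteratedDerivWithin j f (Ioi T)) x :=
    ((hf.mono Ioi_subset_Ici_self).differentiableOn_iteratedDerivWithin (by exact_mod_cast hj)
      isOpen_Ioi.uniqueDiffOn x hx).differentiableAt (isOpen_Ioi.mem_nhds hx)
  rw [iteratedDeriv_succ]
  exact (hdiff.congr_of_eventuallyEq (eventually_of_mem (isOpen_Ioi.mem_nhds hx)
    fun y hy => (iteratedDerivWithin_of_isOpen isOpen_Ioi hy).symm)).hasDerivAt

lemma exists_antitoneOn_Ici_of_iteratedDeriv_pos {f : ℝ → ℝ} {T : ℝ} {m : ℕ} (hm : 1 ≤ m)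
    (hf : ContDiffOn ℝ m f (Ici T)) (hf0 : Tendsto f atTop (𝓝 0))
    (hnonneg : ∀ᶠ x in atTop, 0 ≤ f x) (hpos : ∀ᶠ x in atTop, 0 < iteratedDeriv m f x) :
    ∃ a, AntitoneOn f (Ici a) := by
  have hchain : ∀ j < m, ∀ᶠ x in atTop,
      HasDerivAt (iteratedDeriv j f) (iteratedDeriv (j + 1) f x) x :=
    fun j hj => hf.eventually_hasDerivAt_iteratedDeriv hj
  have hsign := eventually_neg_one_pow_mul_pos_of_hasDerivAt_chain hchain
    (by simpa using hf0) hpos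
  have hsign₀ := hsign m le_rfl
  have hsign₁ := hsign (m - 1) (by omega)
  rw [Nat.sub_self, iteratedDeriv_zero] at hsign₀
  rw [Nat.sub_sub_self hm, iteratedDeriv_one] at hsign₁
  have hpow : (-1 : ℝ) ^ m = -(-1) ^ (m - 1) := by
    rw [← Nat.sub_add_cancel hm, pow_succ, Nat.add_sub_cancel]; ring
  have hderiv_neg : ∀ᶠ x in atTop, deriv f x < 0 := by
    filter_upwards [hsign₀, hsign₁, hnonneg] with x h₀ h₁ hx
    rcases neg_one_pow_eq_or ℝ (m - 1) with hs | hs <;> rw [hpow, hs] at h₀ <;> rw [hs] at h₁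
    · linarith
    · linarith
  obtain ⟨a, ha⟩ := exists_strictMonoOn_Ici_of_eventually_hasDerivAt_pos (f := -f)
    ((hchain 0 (by omega)).mono fun x hx => by simpa using hx.neg) (by simpa using hderiv_neg)
  exact ⟨a, fun x hx y hy hxy => by simpa using ha.monotoneOn hx hy hxy⟩

lemma AntitoneOn.integral_reflect_le {h : ℝ → ℝ} {a t x y : ℝ} (hanti : AntitoneOn h (Ici a))
    (hax : a ≤ x) (hxy : x ≤ y) (hyt : y ≤ t / 2) :
    ∫ u in t - y..t - x, h u ≤ ∫ u in x..y, h u := by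
  have hmem : ∀ u ∈ uIcc x y, u ∈ Ici a ∧ t - u ∈ Ici a ∧ u ≤ t - u := by
    intro u hu
    rw [uIcc_of_le hxy] at hu
    exact ⟨hax.trans hu.1, mem_Ici.2 (by linarith [hu.2]), by linarith [hu.2]⟩
  rw [← intervalIntegral.integral_comp_sub_left (a := x) (b := y) h t]
  refine intervalIntegral.integral_mono_on hxy ?_ ?_ fun u hu => ?_
  · exact MonotoneOn.intervalIntegrable fun u hu v hv huv =>
      hanti (hmem v hv).2.1 (hmem u hu).2.1 (by linarith)
  · exact AntitoneOn.intervalIntegrable fun u hu v hv huv => hanti (hmem u hu).1 (hmem v hv).1 huv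
  · have hu' := hmem u (uIcc_of_le hxy ▸ hu)
    exact hanti hu'.1 hu'.2.1 hu'.2.2

namespace HasHazardRate

variable {F h : ℝ → ℝ} {t₀ : ℝ}

lemma intervalIntegrable (hh : HasHazardRate F h t₀) {a b : ℝ} (ha : t₀ ≤ a) (hb : t₀ ≤ b) :
    IntervalIntegrable h volume a b :=
  (hh.2.2.1.integrableOn_compact_subset (fun _ hx => le_trans (le_inf ha hb) hx.1)
    isCompact_uIcc).intervalIntegrable

lemma antitoneOn_tail_mul_tail (hh : HasHazardRate F h t₀) {a M : ℝ}
    (hanti : AntitoneOn h (Ici a)) (hM₀ : t₀ ≤ M) (hMa : a ≤ M) (t : ℝ) :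
    AntitoneOn (fun x => (1 - F (t - x)) * (1 - F x)) (Icc M (t / 2)) := by
  intro x hx y hy hxy
  have hx₀ : t₀ ≤ x := hM₀.trans hx.1
  have hy₀ : t₀ ≤ y := hM₀.trans hy.1
  have hkey : (∫ u in t₀..t - x, h u) - ∫ u in t₀..t - y, h u ≤
      (∫ u in t₀..y, h u) - ∫ u in t₀..x, h u := by
    have hint : ∀ {b}, t₀ ≤ b → IntervalIntegrable h volume t₀ b :=
      hh.intervalIntegrable le_rfl
    rw [intervalIntegral.integral_interval_sub_left (hint (by linarith [hx.2]))
        (hint (by linarith [hy.2])),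
      intervalIntegral.integral_interval_sub_left (hint hy₀) (hint hx₀)]
    exact hanti.integral_reflect_le (hMa.trans hx.1) hxy hy.2
  have hprod : ∀ s, t₀ ≤ s → t₀ ≤ t - s → (1 - F (t - s)) * (1 - F s) =
      (1 - F t₀) ^ 2 * Real.exp (-((∫ u in t₀..t - s, h u) + ∫ u in t₀..s, h u)) := by
    intro s hs hts
    rw [hh.2.2.2 _ hts, hh.2.2.2 _ hs, neg_add, Real.exp_add]
    ring
  dsimp only
  rw [hprod y hy₀ (by linarith [hy.2]), hprod x hx₀ (by linarith [hx.2])]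
  exact mul_le_mul_of_nonneg_left (Real.exp_le_exp.2 (by linarith)) (sq_nonneg _)

end HasHazardRate

theorem stmt_9_general (F h : ℝ → ℝ) (t₀ α : ℝ) (m : ℕ)
    (hh : HasHazardRate F h t₀) (hb : BasicH h)
    (hm : 1 ≤ m) (hsm : SmoothlyVarying h (α - 1) m) :
    ∃ t₁ M : ℝ, 0 < t₁ ∧ 0 < M ∧ ∀ t, t₁ ≤ t →
      AntitoneOn (fun x => (1 - F (t - x)) * (1 - F x)) (Set.Icc M (t / 2)) := by
  obtain ⟨⟨T, hsmooth⟩, hderiv_rv⟩ := hsm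
  obtain ⟨a, hanti⟩ := exists_antitoneOn_Ici_of_iteratedDeriv_pos hm hsmooth hb.2.2
    (eventually_atTop.2 ⟨t₀, hh.2.1⟩) hderiv_rv.1
  refine ⟨1, max (max t₀ a) 1, one_pos, by positivity, fun t _ => ?_⟩
  exact hh.antitoneOn_tail_mul_tail hanti ((le_max_left _ _).trans (le_max_left _ _))
    ((le_max_right _ _).trans (le_max_left _ _)) t

/-- under (BasicH) and smooth variation of index `α − 1 < 0` and order `m ≥ 1`,
for large `t` the function `x ↦ F̄(t−x)·F̄(x)` is nonincreasing on `[M, t/2]`. -/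
theorem stmt_9 (F h : ℝ → ℝ) (t₀ α : ℝ) (m : ℕ) (hF : IsCDF F)
    (hh : HasHazardRate F h t₀) (hb : BasicH h)
    (hm : 1 ≤ m) (hsm : SmoothlyVarying h (α - 1) m) (hα : α < 1) :
    ∃ t₁ M : ℝ, 0 < t₁ ∧ 0 < M ∧ ∀ t, t₁ ≤ t →
      AntitoneOn (fun x => (1 - F (t - x)) * (1 - F x)) (Set.Icc M (t / 2)) :=
  stmt_9_general F h t₀ α m hh hb hm hsm
end
end

section
/- Let F be a cumulative distribution function on ℝ and let K be a cumulative distribution function supported on the nonnegative half-line such that, for some positive number M, K̄(t) ≤ M·F̄(t) for all t. Then for every interval with endpoints a ≤ b and every nonnegative continuous nondecreasing function f on [a,b], ∫_{(a,b]} f dK ≤ M·( ∫_{(a,b]} f dF + f(b)·F̄(b) ), where the integrals are Lebesgue–Stieltjes integrals. In particular (letting b → ∞), if F is also supported on the nonnegative half-line, then the moments satisfy μ_{K,i} ≤ M·μ_{F,i} for every positive integer i for which μ_{F,i} = ∫ x^i dF(x) is finite. -/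
/-!
Extend `f` by `0` on `(-∞, a]` and by `f b` on `(b, ∞)`. Since `f ≥ 0`, the extension `g` is
monotone on all of `ℝ`, so by the layer-cake formula `∫ g dμ = ∫₀^∞ μ {g > t} dt` with every
superlevel set `{g > t}` an upper set of `ℝ`, i.e. `∅`, `ℝ`, `(s, ∞)` or `[s, ∞)`. The tail bound
on open half-lines passes to the other upper sets by continuity of measure, hence
`∫ g dK ≤ M ∫ g dF`; unfolding `g` gives the first claim after dropping `f(b) K̄(b) ≥ 0`.
For the moments take `g x = max x 0 ^ i`, which equals `x ^ i` `K`-a.e. and is below it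
(after `ENNReal.ofReal`) everywhere.
-/

open MeasureTheory Filter Set Topology

noncomputable section

theorem measure_le_ofReal_mul_of_toReal_le {α : Type*} [MeasurableSpace α] {μ ν : Measure α}
    [IsFiniteMeasure μ] [IsFiniteMeasure ν] {c : ℝ} {s : Set α}
    (h : (μ s).toReal ≤ c * (ν s).toReal) : μ s ≤ ENNReal.ofReal c * ν s := by
  rw [← ENNReal.ofReal_toReal (measure_ne_top μ s), ← ENNReal.ofReal_toReal (measure_ne_top ν s),
    ← ENNReal.ofReal_mul' ENNReal.toReal_nonneg]
  exact ENNReal.ofReal_le_ofReal h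

theorem IsUpperSet.eq_empty_or_univ_or_Ioi_or_Ici {α : Type*}
    [ConditionallyCompleteLinearOrder α] {U : Set α} (hU : IsUpperSet U) :
    U = ∅ ∨ U = univ ∨ (∃ s, U = Ioi s) ∨ ∃ s, U = Ici s := by
  rcases U.eq_empty_or_nonempty with hempty | hne
  · exact Or.inl hempty
  by_cases hbdd : BddBelow U
  · have hIoi : Ioi (sInf U) ⊆ U := fun x hx => by
      obtain ⟨y, hyU, hyx⟩ := exists_lt_of_csInf_lt hne hx
      exact hU hyx.le hyU
    have hIci : U ⊆ Ici (sInf U) := fun x hx => csInf_le hbdd hx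
    by_cases hmem : sInf U ∈ U
    · exact Or.inr <| Or.inr <| Or.inr ⟨sInf U, hIci.antisymm (hU.Ici_subset hmem)⟩
    · refine Or.inr <| Or.inr <| Or.inl ⟨sInf U, hIoi.antisymm' fun x hx => ?_⟩
      exact (hIci hx).lt_of_ne fun h => hmem (h ▸ hx)
  · refine Or.inr <| Or.inl <| eq_univ_of_forall fun x => ?_
    obtain ⟨y, hyU, hyx⟩ := not_bddBelow_iff.1 hbdd x
    exact hU hyx.le hyU

theorem iInter_Ioi_of_tendsto {α : Type*} [LinearOrder α] [TopologicalSpace α]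
    [OrderClosedTopology α] {u : ℕ → α} {s : α} (hlt : ∀ n, u n < s)
    (hu : Tendsto u atTop (𝓝 s)) : ⋂ n, Ioi (u n) = Ici s := by
  ext x
  simp only [mem_iInter, mem_Ioi, mem_Ici]
  exact ⟨fun h => le_of_tendsto' hu fun n => (h n).le, fun h n => (hlt n).trans_le h⟩

theorem tendsto_measure_Ioi_atBot {α : Type*} [MeasurableSpace α] [Preorder α] [NoMinOrder α]
    [(atBot : Filter α).IsCountablyGenerated] (μ : Measure α) :
    Tendsto (fun t => μ (Ioi t)) atBot (𝓝 (μ univ)) := by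
  rw [← iUnion_Ioi]
  exact tendsto_measure_iUnion_atBot antitone_Ioi

theorem tendsto_measure_Ioi_of_tendsto {α : Type*} [LinearOrder α] [TopologicalSpace α]
    [OrderClosedTopology α] [MeasurableSpace α] [OpensMeasurableSpace α] (μ : Measure α)
    [IsFiniteMeasure μ] {u : ℕ → α} {s : α}
    (hmono : Monotone u) (hlt : ∀ n, u n < s) (hu : Tendsto u atTop (𝓝 s)) :
    Tendsto (fun n => μ (Ioi (u n))) atTop (𝓝 (μ (Ici s))) := by
  rw [← iInter_Ioi_of_tendsto hlt hu]
  exact tendsto_measure_iInter_atTop (fun _ => measurableSet_Ioi.nullMeasurableSet)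
    (antitone_Ioi.comp_monotone hmono) ⟨0, measure_ne_top _ _⟩

section TailDomination

variable {μ ν : Measure ℝ} {c : ENNReal}

theorem measure_le_mul_of_tendsto_Ioi (hc : c ≠ ⊤) (h : ∀ t, μ (Ioi t) ≤ c * ν (Ioi t))
    {ι : Type*} {l : Filter ι} [l.NeBot] {u : ι → ℝ} {U : Set ℝ}
    (hμ : Tendsto (fun i => μ (Ioi (u i))) l (𝓝 (μ U)))
    (hν : Tendsto (fun i => ν (Ioi (u i))) l (𝓝 (ν U))) : μ U ≤ c * ν U :=
  le_of_tendsto_of_tendsto' hμ (ENNReal.Tendsto.const_mul hν (Or.inr hc)) fun i => h (u i)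

theorem measure_le_mul_of_isUpperSet [IsFiniteMeasure μ] [IsFiniteMeasure ν] (hc : c ≠ ⊤)
    (h : ∀ t, μ (Ioi t) ≤ c * ν (Ioi t)) {U : Set ℝ} (hU : IsUpperSet U) : μ U ≤ c * ν U := by
  obtain rfl | rfl | ⟨s, rfl⟩ | ⟨s, rfl⟩ := hU.eq_empty_or_univ_or_Ioi_or_Ici
  · simp
  · exact measure_le_mul_of_tendsto_Ioi hc h (tendsto_measure_Ioi_atBot μ)
      (tendsto_measure_Ioi_atBot ν)
  · exact h s
  · obtain ⟨u, hmono, hlt, hu⟩ := exists_seq_strictMono_tendsto s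
    exact measure_le_mul_of_tendsto_Ioi hc h
      (tendsto_measure_Ioi_of_tendsto μ hmono.monotone hlt hu)
      (tendsto_measure_Ioi_of_tendsto ν hmono.monotone hlt hu)

theorem lintegral_le_mul_lintegral_of_monotone [IsFiniteMeasure μ] [IsFiniteMeasure ν]
    (hc : c ≠ ⊤) (h : ∀ t, μ (Ioi t) ≤ c * ν (Ioi t)) {f : ℝ → ℝ} (hf : Monotone f) (hf0 : 0 ≤ f) :
    ∫⁻ x, ENNReal.ofReal (f x) ∂μ ≤ c * ∫⁻ x, ENNReal.ofReal (f x) ∂ν := by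
  rw [lintegral_eq_lintegral_meas_lt μ (ae_of_all _ hf0) hf.measurable.aemeasurable,
    lintegral_eq_lintegral_meas_lt ν (ae_of_all _ hf0) hf.measurable.aemeasurable,
    ← lintegral_const_mul' _ _ hc]
  refine lintegral_mono fun t => measure_le_mul_of_isUpperSet hc h ?_
  exact isUpperSet_setOfPred.2 fun x y hxy htx => htx.trans_le (hf hxy)

theorem integral_le_mul_integral_of_monotone [IsFiniteMeasure μ] [IsFiniteMeasure ν] {c : ℝ}
    (hc : 0 ≤ c) (h : ∀ t, μ (Ioi t) ≤ ENNReal.ofReal c * ν (Ioi t)) {f : ℝ → ℝ}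
    (hf : Monotone f) (hf0 : 0 ≤ f) (hfν : Integrable f ν) :
    ∫ x, f x ∂μ ≤ c * ∫ x, f x ∂ν := by
  rw [integral_eq_lintegral_of_nonneg_ae (ae_of_all _ hf0) hf.measurable.aestronglyMeasurable,
    integral_eq_lintegral_of_nonneg_ae (ae_of_all _ hf0) hf.measurable.aestronglyMeasurable,
    ← ENNReal.toReal_ofReal hc, ← ENNReal.toReal_mul]
  exact ENNReal.toReal_mono (ENNReal.mul_ne_top ENNReal.ofReal_ne_top hfν.lintegral_lt_top.ne)
    (lintegral_le_mul_lintegral_of_monotone ENNReal.ofReal_ne_top h hf hf0)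

theorem lintegral_pow_le_mul_lintegral_pow [IsFiniteMeasure μ] [IsFiniteMeasure ν]
    (hc : c ≠ ⊤) (h : ∀ t, μ (Ioi t) ≤ c * ν (Ioi t)) (hμ : μ (Iio 0) = 0) {i : ℕ} (hi : 0 < i) :
    ∫⁻ x, ENNReal.ofReal (x ^ i) ∂μ ≤ c * ∫⁻ x, ENNReal.ofReal (x ^ i) ∂ν := by
  have hpos : ∀ᵐ x ∂μ, 0 ≤ x :=
    (measure_eq_zero_iff_ae_notMem.1 hμ).mono fun x hx => not_lt.1 hx
  have hle (x : ℝ) : ENNReal.ofReal (max x 0 ^ i) ≤ ENNReal.ofReal (x ^ i) := by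
    rcases le_total x 0 with hx | hx
    · simp [max_eq_right hx, zero_pow hi.ne']
    · rw [max_eq_left hx]
  calc ∫⁻ x, ENNReal.ofReal (x ^ i) ∂μ = ∫⁻ x, ENNReal.ofReal (max x 0 ^ i) ∂μ :=
        lintegral_congr_ae <| hpos.mono fun x hx => by simp only [max_eq_left hx]
    _ ≤ c * ∫⁻ x, ENNReal.ofReal (max x 0 ^ i) ∂ν :=
        lintegral_le_mul_lintegral_of_monotone hc h
          (fun x y hxy => pow_le_pow_left₀ (le_max_right _ _) (max_le_max_right 0 hxy) i)
          fun x => pow_nonneg (le_max_right x 0) i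
    _ ≤ c * ∫⁻ x, ENNReal.ofReal (x ^ i) ∂ν := by gcongr c * ?_; exact lintegral_mono hle

end TailDomination

def extendIoc (a b : ℝ) (f : ℝ → ℝ) : ℝ → ℝ :=
  (Ioi a).indicator fun x => f (min x b)

section ExtendIoc

variable {a b : ℝ} {f : ℝ → ℝ}

theorem min_mem_Icc_of_mem_Ioi (hab : a ≤ b) {x : ℝ} (hx : x ∈ Ioi a) : min x b ∈ Icc a b :=
  ⟨le_min (le_of_lt hx) hab, min_le_right x b⟩

theorem extendIoc_nonneg (hab : a ≤ b) (hf0 : ∀ x ∈ Icc a b, 0 ≤ f x) :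
    0 ≤ extendIoc a b f :=
  fun _ => indicator_nonneg (fun _ hx => hf0 _ (min_mem_Icc_of_mem_Ioi hab hx)) _

theorem monotone_extendIoc (hab : a ≤ b) (hf0 : ∀ x ∈ Icc a b, 0 ≤ f x)
    (hf : MonotoneOn f (Icc a b)) : Monotone (extendIoc a b f) := by
  intro x y hxy
  by_cases hx : x ∈ Ioi a
  · have hy : y ∈ Ioi a := lt_of_lt_of_le hx hxy
    simp only [extendIoc, indicator_of_mem hx, indicator_of_mem hy]
    exact hf (min_mem_Icc_of_mem_Ioi hab hx) (min_mem_Icc_of_mem_Ioi hab hy)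
      (min_le_min_right b hxy)
  · rw [extendIoc, indicator_of_notMem hx]
    exact extendIoc_nonneg hab hf0 y

theorem integrable_extendIoc (μ : Measure ℝ) [IsFiniteMeasure μ] (hab : a ≤ b)
    (hf0 : ∀ x ∈ Icc a b, 0 ≤ f x) (hf : MonotoneOn f (Icc a b)) :
    Integrable (extendIoc a b f) μ := by
  refine Integrable.of_bound (monotone_extendIoc hab hf0 hf).measurable.aestronglyMeasurable
    (f b) (ae_of_all _ fun x => ?_)
  rw [Real.norm_of_nonneg (extendIoc_nonneg hab hf0 x)]
  by_cases hx : x ∈ Ioi a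
  · rw [extendIoc, indicator_of_mem hx]
    exact hf (min_mem_Icc_of_mem_Ioi hab hx) (right_mem_Icc.2 hab) (min_le_right x b)
  · rw [extendIoc, indicator_of_notMem hx]
    exact hf0 b (right_mem_Icc.2 hab)

theorem integral_extendIoc {μ : Measure ℝ} (hab : a ≤ b)
    (hint : Integrable (extendIoc a b f) μ) :
    ∫ x, extendIoc a b f x ∂μ = ∫ x in Ioc a b, f x ∂μ + f b * (μ (Ioi b)).toReal := by
  have hon : IntegrableOn (fun x => f (min x b)) (Ioi a) μ :=
    (integrable_indicator_iff measurableSet_Ioi).1 hint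
  rw [extendIoc, integral_indicator measurableSet_Ioi, ← Ioc_union_Ioi_eq_Ioi hab,
    setIntegral_union Ioc_disjoint_Ioi_same measurableSet_Ioi (hon.mono_set Ioc_subset_Ioi_self)
      (hon.mono_set (Ioi_subset_Ioi hab)),
    setIntegral_congr_fun measurableSet_Ioc fun x hx => congrArg f (min_eq_left hx.2),
    setIntegral_congr_fun measurableSet_Ioi fun x hx => congrArg f (min_eq_right (le_of_lt hx)),
    setIntegral_const, smul_eq_mul, measureReal_def, mul_comm]

end ExtendIoc

/-- a stochastic-order bound. If `K` is supported on `[0,∞)` and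
`K̄ ≤ M·F̄` everywhere, then for any `a ≤ b` and any nonnegative continuous nondecreasing `f`
on `[a,b]`, `∫_{(a,b]} f dK ≤ M(∫_{(a,b]} f dF + f(b)·F̄(b))`; and if `F` is also supported
on `[0,∞)`, then `μ_{K,i} ≤ M·μ_{F,i}` for every positive integer `i` with `μ_{F,i} < ∞`. -/
theorem stmt_10 (μF μK : Measure ℝ) [IsProbabilityMeasure μF] [IsProbabilityMeasure μK]
    (hsuppK : μK (Set.Iio 0) = 0)
    (M : ℝ) (hM : 0 < M)
    (htail : ∀ t : ℝ, (μK (Set.Ioi t)).toReal ≤ M * (μF (Set.Ioi t)).toReal) :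
    (∀ a b : ℝ, a ≤ b → ∀ f : ℝ → ℝ,
      (∀ x ∈ Set.Icc a b, 0 ≤ f x) → ContinuousOn f (Set.Icc a b) →
        MonotoneOn f (Set.Icc a b) →
      (∫ x in Set.Ioc a b, f x ∂μK)
        ≤ M * ((∫ x in Set.Ioc a b, f x ∂μF) + f b * (μF (Set.Ioi b)).toReal)) ∧
    (μF (Set.Iio 0) = 0 → ∀ i : ℕ, 0 < i →
      (∫⁻ x, ENNReal.ofReal (x ^ i) ∂μF) < ⊤ →
      (∫⁻ x, ENNReal.ofReal (x ^ i) ∂μK)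
        ≤ ENNReal.ofReal M * ∫⁻ x, ENNReal.ofReal (x ^ i) ∂μF) := by
  have hdom (t : ℝ) : μK (Ioi t) ≤ ENNReal.ofReal M * μF (Ioi t) :=
    measure_le_ofReal_mul_of_toReal_le (htail t)
  refine ⟨fun a b hab f hf0 _ hf => ?_,
    fun _ i hi _ => lintegral_pow_le_mul_lintegral_pow ENNReal.ofReal_ne_top hdom hsuppK hi⟩
  have hintF := integrable_extendIoc μF hab hf0 hf
  have hle := integral_le_mul_integral_of_monotone hM.le hdom (monotone_extendIoc hab hf0 hf)
    (extendIoc_nonneg hab hf0) hintF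
  rw [integral_extendIoc hab (integrable_extendIoc μK hab hf0 hf),
    integral_extendIoc hab hintF] at hle
  have hKb : 0 ≤ f b * (μK (Ioi b)).toReal :=
    mul_nonneg (hf0 b (right_mem_Icc.2 hab)) ENNReal.toReal_nonneg
  linarith
end
end

section
/- Let F be a cumulative distribution function with hazard rate h on [t₀,∞). Assume h is regularly varying of negative index and that liminf_{t→∞} t·h(t)/log t > 0 (possibly infinite). Then for every nonnegative integer k, F̄(t/2)² / ( h(t)^k · F̄(t) ) → 0 as t → ∞. -/
open MeasureTheory Filter Set

noncomputable section

/-!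
Write `H t = ∫_{t₀}^t h`, so that the quotient is `F̄(t₀) · exp (H t - 2 H (t/2) - k log h(t))`.
Regular variation of negative index gives `h (2u) ≤ q h u` with `q < 1` for `u ≥ T`, and the
substitution `u = 2v` in `∫_{2T}^t h` turns this into
`H t - 2 H (t/2) ≤ C - 2 (1 - q) ∫_T^{t/2} h`. The liminf condition `h u ≥ ε log u / u` makes
`∫_T^{t/2} h` grow like `(ε/2) log² t`, which beats `-k log h(t) ≤ k log t`.
-/

open Real

theorem integral_log_div_self {a b : ℝ} (ha : 0 < a) (hb : 0 < b) :
    ∫ u in a..b, log u / u = log b ^ 2 / 2 - log a ^ 2 / 2 := by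
  have hpos : ∀ x ∈ uIcc a b, 0 < x := fun x hx => (lt_min ha hb).trans_le hx.1
  refine intervalIntegral.integral_eq_sub_of_hasDerivAt (f := fun u => log u ^ 2 / 2)
    (fun x hx => ?_) ?_
  · exact (((hasDerivAt_log (hpos x hx).ne').fun_pow 2).div_const 2).congr_deriv (by ring)
  · exact ContinuousOn.intervalIntegrable fun x hx =>
      ((continuousAt_log (hpos x hx).ne').div continuousAt_id (hpos x hx).ne').continuousWithinAt

theorem MeasureTheory.LocallyIntegrableOn.intervalIntegrable_of_le_s12 {h : ℝ → ℝ} {t₀ a b : ℝ}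
    (hloc : LocallyIntegrableOn h (Ici t₀)) (ha : t₀ ≤ a) (hab : a ≤ b) :
    IntervalIntegrable h volume a b := by
  rw [intervalIntegrable_iff_integrableOn_Icc_of_le hab]
  exact hloc.integrableOn_compact_subset (fun x hx => ha.trans hx.1) isCompact_Icc

section Doubling

variable {h : ℝ → ℝ} {a b q ε : ℝ}

theorem sq_log_sub_le_integral (ha : 0 < a) (hab : a ≤ b) (hint : IntervalIntegrable h volume a b)
    (hlow : ∀ u ∈ Icc a b, ε * log u / u ≤ h u) :
    ε / 2 * (log b ^ 2 - log a ^ 2) ≤ ∫ u in a..b, h u := by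
  have hcont : IntervalIntegrable (fun u => ε * (log u / u)) volume a b := by
    refine ContinuousOn.intervalIntegrable fun x hx => ?_
    rw [uIcc_of_le hab] at hx
    have hx : 0 < x := ha.trans_le hx.1
    exact (continuousAt_const.mul
      ((continuousAt_log hx.ne').div continuousAt_id hx.ne')).continuousWithinAt
  calc ε / 2 * (log b ^ 2 - log a ^ 2) = ∫ u in a..b, ε * (log u / u) := by
        rw [intervalIntegral.integral_const_mul, integral_log_div_self ha (ha.trans_le hab)]
        ring
    _ ≤ ∫ u in a..b, h u :=
        intervalIntegral.integral_mono_on hab hcont hint fun u hu => by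
          simpa only [mul_div_assoc] using hlow u hu

theorem integral_two_mul_le (hab : a ≤ b) (hint : IntervalIntegrable h volume a b)
    (hint₂ : IntervalIntegrable h volume (2 * a) (2 * b))
    (hdouble : ∀ u ∈ Icc a b, h (2 * u) ≤ q * h u) :
    ∫ u in 2 * a..2 * b, h u ≤ 2 * q * ∫ u in a..b, h u := by
  have hcomp : ∫ u in a..b, h (2 * u) = 2⁻¹ * ∫ u in 2 * a..2 * b, h u :=
    intervalIntegral.integral_comp_mul_left h two_ne_zero
  have hmono : ∫ u in a..b, h (2 * u) ≤ ∫ u in a..b, q * h u :=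
    intervalIntegral.integral_mono_on hab
      (by simpa using hint₂.comp_mul_left (c := 2)) (hint.const_mul q) hdouble
  rw [hcomp, intervalIntegral.integral_const_mul] at hmono
  linarith

theorem integral_two_mul_sub_two_mul_integral_le {t₀ T s : ℝ}
    (hloc : LocallyIntegrableOn h (Ici t₀))
    (ht₀ : t₀ ≤ T) (hT : 0 < T) (hq : q ≤ 1) (hdouble : ∀ u ≥ T, h (2 * u) ≤ q * h u)
    (hlow : ∀ u ≥ T, ε * log u / u ≤ h u) (hs : T ≤ s) :
    (∫ u in t₀..2 * s, h u) - 2 * ∫ u in t₀..s, h u ≤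
      (∫ u in t₀..2 * T, h u) - 2 * (∫ u in t₀..T, h u) -
        (1 - q) * ε * (log s ^ 2 - log T ^ 2) := by
  have hint : ∀ {a b}, t₀ ≤ a → a ≤ b → IntervalIntegrable h volume a b :=
    hloc.intervalIntegrable_of_le_s12
  have hsplit₁ : ∫ u in t₀..s, h u = (∫ u in t₀..T, h u) + ∫ u in T..s, h u :=
    (intervalIntegral.integral_add_adjacent_intervals (hint le_rfl ht₀) (hint ht₀ hs)).symm
  have hsplit₂ : ∫ u in t₀..2 * s, h u = (∫ u in t₀..2 * T, h u) + ∫ u in 2 * T..2 * s, h u :=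
    (intervalIntegral.integral_add_adjacent_intervals (hint le_rfl (by linarith))
      (hint (by linarith) (by linarith))).symm
  have hdoubling := integral_two_mul_le hs (hint ht₀ hs) (hint (by linarith) (by linarith))
    fun u hu => hdouble u hu.1
  have hlog := sq_log_sub_le_integral hT hs (hint ht₀ hs) fun u hu => hlow u hu.1
  have := mul_le_mul_of_nonneg_left hlog (by linarith : 0 ≤ 2 * (1 - q))
  linarith

theorem tendsto_integral_sub_two_mul_integral_half_add_log_atBot {t₀ : ℝ}
    (hloc : LocallyIntegrableOn h (Ici t₀)) (hq : q < 1) (hε : 0 < ε)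
    (hdouble : ∀ᶠ u in atTop, h (2 * u) ≤ q * h u) (hlow : ∀ᶠ u in atTop, ε * log u / u ≤ h u)
    (m : ℝ) :
    Tendsto (fun t => (∫ u in t₀..t, h u) - 2 * (∫ u in t₀..t / 2, h u) + m * log t)
      atTop atBot := by
  obtain ⟨T, hT⟩ := eventually_atTop.1 ((hdouble.and hlow).and (eventually_ge_atTop (max t₀ 1)))
  have hT₀ : max t₀ 1 ≤ T := (hT T le_rfl).2
  set c := (1 - q) * ε
  set K := (∫ u in t₀..2 * T, h u) - 2 * (∫ u in t₀..T, h u) + c * log T ^ 2 + m * log 2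
  have hquad : Tendsto (fun L => K + L * (m - c * L)) atTop atBot :=
    tendsto_atBot_add_const_left _ K <| tendsto_id.atTop_mul_atBot₀ <|
      tendsto_atBot_add_const_left _ m <| tendsto_neg_atTop_atBot.comp <|
        tendsto_id.const_mul_atTop (mul_pos (sub_pos.2 hq) hε)
  refine tendsto_atBot_mono' _ ?_
    (hquad.comp <| tendsto_log_atTop.comp <| tendsto_id.atTop_div_const two_pos)
  filter_upwards [eventually_ge_atTop (2 * T)] with t ht
  have hbound := integral_two_mul_sub_two_mul_integral_le hloc (le_of_max_le_left hT₀)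
    (by linarith [le_of_max_le_right hT₀]) hq.le (fun u hu => (hT u hu).1.1)
    (fun u hu => (hT u hu).1.2) (by linarith : T ≤ t / 2)
  have hlog : log t = log (t / 2) + log 2 := by
    rw [← log_mul (by linarith [le_of_max_le_right hT₀]) two_ne_zero, div_mul_cancel₀ t two_ne_zero]
  rw [mul_div_cancel₀ t two_ne_zero] at hbound
  simp only [Function.comp_apply, id, K, c, hlog]
  linarith

theorem eventually_neg_log_le_log (hε : 0 < ε)
    (hlow : ∀ᶠ t in atTop, ε * log t / t ≤ h t) : ∀ᶠ t in atTop, -log (h t) ≤ log t := by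
  filter_upwards [hlow, eventually_ge_atTop (exp ε⁻¹)] with t hlow ht
  have ht₀ : 0 < t := (exp_pos _).trans_le ht
  have hεlog : 1 ≤ ε * log t := by
    rw [← div_le_iff₀' hε, one_div, ← log_exp ε⁻¹]
    exact log_le_log (exp_pos _) ht
  have hinv : t⁻¹ ≤ h t := by
    rw [inv_eq_one_div]
    exact (div_le_div_of_nonneg_right hεlog ht₀.le).trans hlow
  have := log_le_log (inv_pos.2 ht₀) hinv
  rw [log_inv] at this
  linarith

end Doubling

theorem RegularlyVarying.eventually_le_mul {g : ℝ → ℝ} {ρ a q : ℝ} (hg : RegularlyVarying g ρ)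
    (ha : 0 < a) (hq : a ^ ρ < q) : ∀ᶠ t in atTop, g (a * t) ≤ q * g t := by
  filter_upwards [hg.1, (hg.2 a ha).eventually_lt_const hq] with t hpos hlt
  exact ((div_lt_iff₀ hpos).1 hlt).le

theorem HasHazardRate.tail_half_sq_div_eq {F h : ℝ → ℝ} {t₀ t : ℝ} (hh : HasHazardRate F h t₀)
    (k : ℕ) (ht₀ : t₀ ≤ t / 2) (ht : t₀ ≤ t) (hpos : 0 < h t) :
    (1 - F (t / 2)) ^ 2 / (h t ^ k * (1 - F t)) =
      (1 - F t₀) * exp ((∫ u in t₀..t, h u) - 2 * (∫ u in t₀..t / 2, h u) - k * log (h t)) := by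
  have hpow : h t ^ k = exp (k * log (h t)) := by rw [exp_nat_mul, exp_log hpos]
  rw [hh.2.2.2 _ ht₀, hh.2.2.2 _ ht, hpow, div_eq_iff (by have := hh.1; positivity)]
  set A := ∫ u in t₀..t / 2, h u
  set B := ∫ u in t₀..t, h u
  calc ((1 - F t₀) * exp (-A)) ^ 2 = (1 - F t₀) ^ 2 * exp (B - 2 * A - k * log (h t) +
      k * log (h t) + -B) := by rw [mul_pow, ← exp_nat_mul]; ring_nf
    _ = _ := by rw [exp_add, exp_add]; ring

theorem stmt_12_general (F h : ℝ → ℝ) (t₀ ρ : ℝ)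
    (hh : HasHazardRate F h t₀)
    (hρ : ρ < 0) (hrv : RegularlyVarying h ρ)
    (hliminf : ∃ ε : ℝ, 0 < ε ∧ ∀ᶠ t in Filter.atTop, ε ≤ t * h t / Real.log t) :
    ∀ k : ℕ,
      Filter.Tendsto (fun t => (1 - F (t / 2)) ^ 2 / (h t ^ k * (1 - F t)))
        Filter.atTop (nhds 0) := by
  intro k
  obtain ⟨ε, hε, hliminf⟩ := hliminf
  obtain ⟨q, h2q, hq⟩ := exists_between (rpow_lt_one_of_one_lt_of_neg one_lt_two hρ)
  have hlow : ∀ᶠ t in atTop, ε * log t / t ≤ h t := by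
    filter_upwards [hliminf, eventually_gt_atTop 1] with t ht ht₁
    rw [div_le_iff₀ (by linarith), mul_comm (h t)]
    exact (le_div_iff₀ (log_pos ht₁)).1 ht
  have hexponent : Tendsto (fun t => (∫ u in t₀..t, h u) - 2 * (∫ u in t₀..t / 2, h u) -
      k * log (h t)) atTop atBot := by
    refine tendsto_atBot_mono' _ ?_ (tendsto_integral_sub_two_mul_integral_half_add_log_atBot
      hh.2.2.1 hq hε (hrv.eventually_le_mul two_pos h2q) hlow k)
    filter_upwards [eventually_neg_log_le_log hε hlow] with t ht
    linarith [mul_le_mul_of_nonneg_left ht (Nat.cast_nonneg (α := ℝ) k)]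
  have hlim := (tendsto_exp_atBot.comp hexponent).const_mul (1 - F t₀)
  rw [mul_zero] at hlim
  refine hlim.congr' ?_
  filter_upwards [eventually_ge_atTop (2 * |t₀|), hrv.1] with t ht hpos
  exact (hh.tail_half_sq_div_eq k (by linarith [le_abs_self t₀, neg_abs_le t₀])
    (by linarith [le_abs_self t₀, abs_nonneg t₀]) hpos).symm

/-- if `h` is regularly varying of negative index and
`liminf t·h(t)/log t > 0` (possibly infinite), then `F̄(t/2)² = o(h(t)^k F̄(t))` for all `k`. -/
theorem stmt_12 (F h : ℝ → ℝ) (t₀ ρ : ℝ) (hF : IsCDF F)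
    (hh : HasHazardRate F h t₀)
    (hρ : ρ < 0) (hrv : RegularlyVarying h ρ)
    (hliminf : ∃ ε : ℝ, 0 < ε ∧ ∀ᶠ t in Filter.atTop, ε ≤ t * h t / Real.log t) :
    ∀ k : ℕ,
      Filter.Tendsto (fun t => (1 - F (t / 2)) ^ 2 / (h t ^ k * (1 - F t)))
        Filter.atTop (nhds 0) :=
  stmt_12_general F h t₀ ρ hh hρ hrv hliminf
end
end

section
/- Let F be a cumulative distribution function supported on [0,∞) with hazard rate h on [t₀,∞) satisfying condition (BasicH). Assume h is regularly varying of negative index and that F is subexponential. Let M > 0 and let K be a cumulative distribution function in B(F,M). If g is a measurable function with g(t)/(h(t)^m·F̄(t)) → 0 as t → ∞, then T_K g(t)/(h(t)^m·F̄(t)) → 0 as t → ∞. -/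
open MeasureTheory Filter Set

noncomputable section

/-- `K` (a probability measure on `ℝ`) belongs to `B(F,M)`: both `K̄(t)` and `K(−t)` are
bounded by `M·F̄(t)` for all `t ≥ 0`. Here `F̄ = 1 − F`. -/
def MemB (F : ℝ → ℝ) (M : ℝ) (μK : Measure ℝ) : Prop :=
  ∀ t : ℝ, 0 ≤ t → (μK (Set.Ioi t)).toReal ≤ M * (1 - F t) ∧
    (μK (Set.Iic (-t))).toReal ≤ M * (1 - F t)

/-- The operator `T_K` (written `Tops`): `T_K f(t) = ∫_{(−∞,t/2]} f(t−x) dK(x)`. -/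
def Tops (μK : Measure ℝ) (f : ℝ → ℝ) : ℝ → ℝ :=
  fun t => ∫ x in Set.Iic (t / 2), f (t - x) ∂μK

open scoped ENNReal Topology

/-!
Since `h` is regularly varying of negative index, `h(u t) / h(t) → u ^ ρ` in measure for
`u ∈ [1, 4]`, which yields the Potter-type bound `h s ≤ C h t` for all `s ≥ t / 2`, `t` large.
Hence `|g (t - x)| ≤ ε C^m h(t)^m F̄(t - x)` for `x ≤ t / 2`, and the claim reduces to
`∫_{x ≤ t/2} F̄(t - x) dK(x) = O(F̄(t))`. By Fubini this integral is at most
`∫ K̄(t - y) dF(y) ≤ M (F ⋆ F)‾(t) + F̄(t)`, which is `O(F̄(t))` by subexponentiality.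
-/

theorem measurable_measure_Ioi_sub (ν : Measure ℝ) (t : ℝ) :
    Measurable fun x => ν (Ioi (t - x)) :=
  Monotone.measurable fun _ _ hxy => measure_mono (Ioi_subset_Ioi (by linarith))

theorem conv_apply_Ioi (μ ν : Measure ℝ) [SFinite ν] (t : ℝ) :
    (μ ∗ ν) (Ioi t) = ∫⁻ x, ν (Ioi (t - x)) ∂μ := by
  rw [← lintegral_indicator_one measurableSet_Ioi,
    Measure.lintegral_conv (measurable_one.indicator measurableSet_Ioi)]
  refine lintegral_congr fun x => ?_
  rw [← lintegral_indicator_one measurableSet_Ioi]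
  congr 1 with y
  simp only [indicator, mem_Ioi, Pi.one_apply, sub_lt_iff_lt_add']

theorem lintegral_measure_Ioi_sub_comm (μ ν : Measure ℝ) [SFinite μ] [SFinite ν] (t : ℝ) :
    ∫⁻ x, ν (Ioi (t - x)) ∂μ = ∫⁻ y, μ (Ioi (t - y)) ∂ν := by
  rw [← conv_apply_Ioi, Measure.conv_comm, conv_apply_Ioi]

theorem lintegral_measure_Ioi_sub_le (μ ν : Measure ℝ) [IsProbabilityMeasure μ] [SFinite ν]
    {M : ℝ≥0∞} (hμ : ∀ s, 0 ≤ s → μ (Ioi s) ≤ M * ν (Ioi s)) (t : ℝ) :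
    ∫⁻ x, ν (Ioi (t - x)) ∂μ ≤ M * (ν ∗ ν) (Ioi t) + ν (Ioi t) := by
  have hbound : ∀ y, μ (Ioi (t - y)) ≤ M * ν (Ioi (t - y)) + (Ioi t).indicator 1 y := by
    intro y
    rcases le_or_gt y t with hy | hy
    · exact (hμ _ (sub_nonneg.2 hy)).trans le_self_add
    · simpa [indicator_of_mem (mem_Ioi.2 hy)] using prob_le_one.trans le_add_self
  calc ∫⁻ x, ν (Ioi (t - x)) ∂μ = ∫⁻ y, μ (Ioi (t - y)) ∂ν := lintegral_measure_Ioi_sub_comm ..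
    _ ≤ ∫⁻ y, M * ν (Ioi (t - y)) + (Ioi t).indicator 1 y ∂ν := lintegral_mono hbound
    _ = M * (ν ∗ ν) (Ioi t) + ν (Ioi t) := by
      rw [lintegral_add_right _ (measurable_one.indicator measurableSet_Ioi),
        lintegral_const_mul _ (measurable_measure_Ioi_sub ν t), ← conv_apply_Ioi,
        lintegral_indicator_one measurableSet_Ioi]

theorem integral_Iic_measure_Ioi_sub_le (μ ν : Measure ℝ) [IsProbabilityMeasure μ]
    [IsProbabilityMeasure ν] {M : ℝ} (hM : 0 ≤ M)
    (hμ : ∀ s, 0 ≤ s → (μ (Ioi s)).toReal ≤ M * (ν (Ioi s)).toReal) (t : ℝ) :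
    ∫ x in Iic (t / 2), (ν (Ioi (t - x))).toReal ∂μ
      ≤ M * ((ν ∗ ν) (Ioi t)).toReal + (ν (Ioi t)).toReal := by
  have hμ' : ∀ s, 0 ≤ s → μ (Ioi s) ≤ ENNReal.ofReal M * ν (Ioi s) := fun s hs => by
    rw [← ENNReal.ofReal_toReal (measure_ne_top μ _),
      ← ENNReal.ofReal_toReal (measure_ne_top ν (Ioi s)), ← ENNReal.ofReal_mul hM]
    exact ENNReal.ofReal_le_ofReal (hμ s hs)
  rw [integral_toReal (measurable_measure_Ioi_sub ν t).aemeasurable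
    (ae_of_all _ fun _ => measure_lt_top _ _)]
  calc _ ≤ (∫⁻ x, ν (Ioi (t - x)) ∂μ).toReal := by
        refine ENNReal.toReal_mono ?_ (setLIntegral_le_lintegral _ _)
        exact ne_top_of_le_ne_top (by finiteness) (lintegral_measure_Ioi_sub_le μ ν hμ' t)
    _ ≤ (ENNReal.ofReal M * (ν ∗ ν) (Ioi t) + ν (Ioi t)).toReal :=
        ENNReal.toReal_mono (by finiteness) (lintegral_measure_Ioi_sub_le μ ν hμ' t)
    _ = M * ((ν ∗ ν) (Ioi t)).toReal + (ν (Ioi t)).toReal := by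
        rw [ENNReal.toReal_add (by finiteness) (by finiteness), ENNReal.toReal_mul,
          ENNReal.toReal_ofReal hM]

theorem integrable_toReal_measure_Ioi_sub (μ ν : Measure ℝ) [IsFiniteMeasure μ]
    [IsFiniteMeasure ν] (t : ℝ) : Integrable (fun x => (ν (Ioi (t - x))).toReal) μ := by
  refine Integrable.of_bound (measurable_measure_Ioi_sub ν t).ennreal_toReal.aestronglyMeasurable
    (ν univ).toReal (ae_of_all _ fun x => ?_)
  rw [Real.norm_of_nonneg ENNReal.toReal_nonneg]
  exact ENNReal.toReal_mono (measure_ne_top ν _) (measure_mono (subset_univ _))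

theorem one_sub_toReal_measure_Iic (μ : Measure ℝ) [IsProbabilityMeasure μ] (t : ℝ) :
    1 - (μ (Iic t)).toReal = (μ (Ioi t)).toReal := by
  rw [← compl_Iic]
  exact (probReal_compl_eq_one_sub measurableSet_Iic).symm

theorem MemB.eventually_integral_Iic_le {μ ν : Measure ℝ} [IsProbabilityMeasure μ]
    [IsProbabilityMeasure ν] {M : ℝ} (hM : 0 ≤ M) (hμ : MemB (fun t => (ν (Iic t)).toReal) M μ)
    (hν : ∀ᶠ t in atTop, 0 < (ν (Ioi t)).toReal)
    (hsub : Tendsto (fun t => ((ν ∗ ν) (Ioi t)).toReal / (ν (Ioi t)).toReal) atTop (𝓝 2)) :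
    ∀ᶠ t in atTop, ∫ x in Iic (t / 2), (ν (Ioi (t - x))).toReal ∂μ
      ≤ (3 * M + 1) * (ν (Ioi t)).toReal := by
  have hμ' s (hs : 0 ≤ s) := one_sub_toReal_measure_Iic ν s ▸ (hμ s hs).1
  filter_upwards [hsub.eventually_lt_const (by norm_num : (2 : ℝ) < 3), hν] with t ht hpos
  calc _ ≤ M * ((ν ∗ ν) (Ioi t)).toReal + (ν (Ioi t)).toReal :=
        integral_Iic_measure_Ioi_sub_le μ ν hM hμ' t
    _ ≤ M * (3 * (ν (Ioi t)).toReal) + (ν (Ioi t)).toReal := by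
        gcongr
        exact ((div_lt_iff₀ hpos).1 ht).le
    _ = (3 * M + 1) * (ν (Ioi t)).toReal := by ring

theorem HasHazardRate.one_sub_pos {F h : ℝ → ℝ} {t₀ t : ℝ} (hh : HasHazardRate F h t₀)
    (ht : t₀ ≤ t) : 0 < 1 - F t := by
  rw [hh.2.2.2 t ht]
  exact mul_pos hh.1 (Real.exp_pos _)

theorem div_mem_Icc_one_four {u l : ℝ} (hu : u ∈ Icc (2 : ℝ) 4) (hl : l ∈ Icc (1 : ℝ) 2) :
    u / l ∈ Icc (1 : ℝ) 4 := by
  have hl0 : 0 < l := zero_lt_one.trans_le hl.1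
  constructor
  · rw [le_div_iff₀ hl0]; linarith [hu.1, hl.2]
  · rw [div_le_iff₀ hl0]; nlinarith [hu.2, hl.1]

theorem exists_mem_Icc_notMem_of_measure_lt {A B : Set ℝ} {l : ℝ} (hl : l ∈ Icc (1 : ℝ) 2)
    (hA : volume.restrict (Icc 1 4) A < 2⁻¹) (hB : volume.restrict (Icc 1 4) B < 2⁻¹) :
    ∃ u ∈ Icc (2 : ℝ) 4, u ∉ A ∧ u / l ∉ B := by
  have hl0 : 0 < l := zero_lt_one.trans_le hl.1
  by_contra! hcover
  have hsub : Icc (2 : ℝ) 4 ⊆ (A ∩ Icc 1 4) ∪ (· * l⁻¹) ⁻¹' (B ∩ Icc 1 4) := by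
    intro u hu
    by_cases huA : u ∈ A
    · exact Or.inl ⟨huA, by constructor <;> linarith [hu.1, hu.2]⟩
    · exact Or.inr ⟨hcover u hu huA, div_mem_Icc_one_four hu hl⟩
  rw [Measure.restrict_apply' measurableSet_Icc] at hA hB
  have hB' : ENNReal.ofReal |l⁻¹⁻¹| * volume (B ∩ Icc 1 4) < 1 := by
    rw [inv_inv, abs_of_pos hl0]
    calc ENNReal.ofReal l * volume (B ∩ Icc 1 4) ≤ 2 * volume (B ∩ Icc 1 4) := by
          gcongr
          exact ENNReal.ofReal_le_of_le_toReal (by simpa using hl.2)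
      _ < 2 * 2⁻¹ := by gcongr; simp
      _ = 1 := ENNReal.mul_inv_cancel two_ne_zero ENNReal.ofNat_ne_top
  have := calc (2 : ℝ≥0∞) = volume (Icc (2 : ℝ) 4) := by rw [Real.volume_Icc]; norm_num
    _ ≤ volume (A ∩ Icc 1 4) + volume ((· * l⁻¹) ⁻¹' (B ∩ Icc 1 4)) :=
        (measure_mono hsub).trans (measure_union_le _ _)
    _ < 1 + 1 := by
        rw [Real.volume_preimage_mul_right (inv_ne_zero hl0.ne')]
        exact ENNReal.add_lt_add (hA.trans (by norm_num)) hB'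
  norm_num at this

section RegularVariation

variable {h : ℝ → ℝ} {ρ a : ℝ}

theorem RegularlyVarying.tendstoInMeasure (hrv : RegularlyVarying h ρ)
    (hmeas : AEStronglyMeasurable h (volume.restrict (Ici a))) (b : ℝ) {t : ℕ → ℝ}
    (ht : ∀ n, max a 1 ≤ t n) (htop : Tendsto t atTop atTop) :
    TendstoInMeasure (volume.restrict (Icc 1 b)) (fun n u => h (u * t n) / h (t n)) atTop
      (fun u => u ^ ρ) := by
  refine tendstoInMeasure_of_tendsto_ae (fun n => ?_) ?_
  · have htn : 0 < t n := zero_lt_one.trans_le ((le_max_right _ _).trans (ht n))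
    have hqmp : Measure.QuasiMeasurePreserving (· * t n) (volume.restrict (Icc 1 b))
        (volume.restrict (Ici a)) := by
      refine Measure.QuasiMeasurePreserving.restrict ⟨measurable_mul_const _, ?_⟩ ?_
      · rw [Real.map_volume_mul_right htn.ne']
        exact Measure.smul_absolutelyContinuous
      · intro u hu
        exact (le_max_left _ _).trans ((ht n).trans (le_mul_of_one_le_left htn.le hu.1))
    exact ((hmeas.aemeasurable.comp_quasiMeasurePreserving hqmp).div_const _).aestronglyMeasurable
  · exact (ae_restrict_iff' measurableSet_Icc).2 <| ae_of_all _ fun u hu =>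
      (hrv.2 u (zero_lt_one.trans_le hu.1)).comp htop

theorem RegularlyVarying.tendsto_measure_deviation
    (hrv : RegularlyVarying h ρ) (hmeas : AEStronglyMeasurable h (volume.restrict (Ici a)))
    (b : ℝ) {ε : ℝ≥0∞} (hε : 0 < ε) :
    Tendsto (fun t => volume.restrict (Icc 1 b) {u | ε ≤ edist (h (u * t) / h t) (u ^ ρ)})
      atTop (𝓝 0) := by
  have hmax : Tendsto (fun t => volume.restrict (Icc 1 b)
      {u | ε ≤ edist (h (u * max t (max a 1)) / h (max t (max a 1))) (u ^ ρ)}) atTop (𝓝 0) :=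
    tendsto_iff_seq_tendsto.2 fun s hs =>
      hrv.tendstoInMeasure hmeas b (fun n => le_max_right _ _)
        (tendsto_atTop_mono (fun n => le_max_left _ _) hs) ε hε
  refine hmax.congr' ?_
  filter_upwards [eventually_ge_atTop (max a 1)] with t ht
  rw [max_eq_left ht]

theorem RegularlyVarying.exists_le_mul_of_mem_Icc
    (hrv : RegularlyVarying h ρ) (hmeas : AEStronglyMeasurable h (volume.restrict (Ici a))) :
    ∃ C T, ∀ x ≥ T, ∀ l ∈ Icc (1 : ℝ) 2, h (l * x) ≤ C * h x := by
  set c : ℝ := (4 : ℝ) ^ (-|ρ|) / 2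
  have hc : 0 < c := by positivity
  have hlow : ∀ v ∈ Icc (1 : ℝ) 4, 2 * c ≤ v ^ ρ := fun v hv =>
    calc 2 * c = (4 : ℝ) ^ (-|ρ|) := by ring
      _ ≤ v ^ (-|ρ|) := Real.rpow_le_rpow_of_nonpos (by linarith [hv.1]) hv.2 (by simp)
      _ ≤ v ^ ρ := Real.rpow_le_rpow_of_exponent_le hv.1 (neg_abs_le ρ)
  have hup : ∀ v ∈ Icc (1 : ℝ) 4, v ^ ρ ≤ 4 ^ |ρ| := fun v hv =>
    calc v ^ ρ ≤ v ^ |ρ| := Real.rpow_le_rpow_of_exponent_le hv.1 (le_abs_self ρ)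
      _ ≤ 4 ^ |ρ| := Real.rpow_le_rpow (by linarith [hv.1]) hv.2 (abs_nonneg ρ)
  have hsmall := Tendsto.eventually_lt_const (ENNReal.inv_pos.2 (ENNReal.ofNat_ne_top (n := 2)))
    (hrv.tendsto_measure_deviation hmeas 4 (ENNReal.ofReal_pos.2 hc))
  obtain ⟨T, hT⟩ := eventually_atTop.1 (hsmall.and (hrv.1.and (eventually_ge_atTop 0)))
  refine ⟨(4 ^ |ρ| + c) / c, T, fun x hx l hl => ?_⟩
  obtain ⟨hxA, hx_pos, hx0⟩ := hT x hx
  obtain ⟨hyB, hy_pos, -⟩ := hT (l * x) (hx.trans (le_mul_of_one_le_left hx0 hl.1))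
  -- `h (u * x)` is compared both with `h x` and with `h (l * x)`, at a scale `u` that is good
  -- for both; it exists since the bad scales of `x` and of `l * x` have small measure.
  obtain ⟨u, hu, huA, huB⟩ := exists_mem_Icc_notMem_of_measure_lt hl hxA hyB
  have hul : u / l * (l * x) = u * x := by
    field_simp [(zero_lt_one.trans_le hl.1).ne']
  simp only [mem_ofPred_eq, not_le, edist_lt_ofReal, Real.dist_eq, abs_lt, hul] at huA huB
  have hux_upper : h (u * x) < (4 ^ |ρ| + c) * h x := by
    rw [← div_lt_iff₀ hx_pos]
    linarith [hup u ⟨by linarith [hu.1], hu.2⟩]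
  have hux_lower : c * h (l * x) < h (u * x) := by
    rw [← lt_div_iff₀ hy_pos]
    linarith [hlow _ (div_mem_Icc_one_four hu hl)]
  rw [div_mul_eq_mul_div, le_div_iff₀ hc]
  linarith

theorem RegularlyVarying.exists_le_mul_of_le (hρ : ρ < 0)
    (hrv : RegularlyVarying h ρ) (hmeas : AEStronglyMeasurable h (volume.restrict (Ici a))) :
    ∃ C T, 0 < C ∧ ∀ x ≥ T, ∀ s ≥ x, h s ≤ C * h x := by
  obtain ⟨C, T₁, hT₁⟩ := hrv.exists_le_mul_of_mem_Icc hmeas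
  have hdouble : ∀ᶠ y in atTop, h (2 * y) ≤ h y := by
    have hlt := (hrv.2 2 two_pos).eventually_lt_const
      (Real.rpow_lt_one_of_one_lt_of_neg one_lt_two hρ)
    filter_upwards [hlt, hrv.1] with y hy hpos
    exact ((div_lt_one hpos).1 hy).le
  obtain ⟨T, hT⟩ := eventually_atTop.1 (hdouble.and
    (hrv.1.and ((eventually_ge_atTop T₁).and (eventually_gt_atTop 0))))
  have hC : 1 ≤ C := by
    obtain ⟨-, hpos, hTT₁, -⟩ := hT T le_rfl
    have := hT₁ T hTT₁ 1 (by norm_num)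
    rw [one_mul] at this
    exact (le_mul_iff_one_le_left hpos).1 this
  have hpow : ∀ k : ℕ, ∀ x ≥ T, ∀ s ∈ Icc x (2 ^ k * x), h s ≤ C * h x := by
    intro k
    induction k with
    | zero =>
      intro x hx s hs
      obtain rfl : s = x := le_antisymm (by simpa using hs.2) hs.1
      exact le_mul_of_one_le_left (hT s hx).2.1.le hC
    | succ k ih =>
      intro x hx s hs
      obtain ⟨hdouble_x, -, hxT₁, hx0⟩ := hT x hx
      rcases le_or_gt s (2 * x) with hs2 | hs2
      · have hl : s / x ∈ Icc (1 : ℝ) 2 :=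
          ⟨(one_le_div hx0).2 hs.1, (div_le_iff₀ hx0).2 hs2⟩
        simpa [div_mul_cancel₀ s hx0.ne'] using hT₁ x hxT₁ (s / x) hl
      · have h2x : 2 * x ≥ T := hx.trans (by linarith)
        calc h s ≤ C * h (2 * x) :=
              ih (2 * x) h2x s ⟨hs2.le, by rw [pow_succ] at hs; linarith [hs.2]⟩
          _ ≤ C * h x := mul_le_mul_of_nonneg_left hdouble_x (zero_le_one.trans hC)
  refine ⟨C, T, zero_lt_one.trans_le hC, fun x hx s hs => ?_⟩
  have hx0 := (hT x hx).2.2.2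
  obtain ⟨k, hk⟩ := pow_unbounded_of_one_lt (s / x) one_lt_two
  exact hpow k x hx s ⟨hs, ((div_lt_iff₀ hx0).1 hk).le⟩

theorem RegularlyVarying.exists_le_mul_of_half_le (hρ : ρ < 0)
    (hrv : RegularlyVarying h ρ) (hmeas : AEStronglyMeasurable h (volume.restrict (Ici a))) :
    ∃ C, ∀ᶠ x in atTop, ∀ s ≥ x / 2, h s ≤ C * h x := by
  obtain ⟨C, T₁, hC, hT₁⟩ := hrv.exists_le_mul_of_le hρ hmeas
  have hhalf : ∀ᶠ x in atTop, h (2⁻¹ * x) ≤ (2⁻¹ ^ ρ + 1) * h x := by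
    have hlt := (hrv.2 2⁻¹ (by norm_num)).eventually_lt_const (lt_add_one (2⁻¹ ^ ρ))
    filter_upwards [hlt, hrv.1] with x hx hpos
    exact ((div_lt_iff₀ hpos).1 hx).le
  refine ⟨C * (2⁻¹ ^ ρ + 1), ?_⟩
  filter_upwards [hhalf, eventually_ge_atTop (2 * T₁)] with x hhalf_x hxT₁ s hs
  rw [div_eq_inv_mul] at hs
  calc h s ≤ C * h (2⁻¹ * x) := hT₁ _ (by linarith) s hs
    _ ≤ C * ((2⁻¹ ^ ρ + 1) * h x) := mul_le_mul_of_nonneg_left hhalf_x hC.le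
    _ = C * (2⁻¹ ^ ρ + 1) * h x := by ring

end RegularVariation

theorem eventually_norm_pow_le_of_half_le {h : ℝ → ℝ} {t₀ C : ℝ}
    (h_nonneg : ∀ t, t₀ ≤ t → 0 ≤ h t)
    (hC : ∀ᶠ x in atTop, ∀ s ≥ x / 2, h s ≤ C * h x) (m : ℕ) :
    ∀ᶠ x in atTop, ∀ s ≥ x / 2, ‖h s ^ m‖ ≤ C ^ m * ‖h x ^ m‖ := by
  filter_upwards [hC, eventually_ge_atTop t₀, eventually_ge_atTop (2 * t₀)]
    with x hCx hx₀ hx₀' s hs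
  have hs0 : 0 ≤ h s := h_nonneg s (by linarith)
  rw [norm_pow, norm_pow, ← mul_pow, Real.norm_of_nonneg hs0, Real.norm_of_nonneg (h_nonneg x hx₀)]
  exact pow_le_pow_left₀ hs0 (hCx s hs) m

theorem isLittleO_Tops {μK : Measure ℝ} {g u v : ℝ → ℝ} {C D : ℝ}
    (hu : ∀ᶠ t in atTop, ∀ s ≥ t / 2, ‖u s‖ ≤ C * ‖u t‖) (hv_nonneg : ∀ s, 0 ≤ v s)
    (hv_int : ∀ t, IntegrableOn (fun x => v (t - x)) (Iic (t / 2)) μK)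
    (hKv : ∀ᶠ t in atTop, ∫ x in Iic (t / 2), v (t - x) ∂μK ≤ D * v t)
    (hg : g =o[atTop] fun t => u t * v t) :
    Tops μK g =o[atTop] fun t => u t * v t := by
  refine Asymptotics.IsLittleO.of_bound fun c hc => ?_
  set ε := c / (|C * D| + 1)
  have hε : 0 < ε := by positivity
  have hεCD : ε * (C * D) ≤ c := by
    calc ε * (C * D) ≤ ε * (|C * D| + 1) := by gcongr; linarith [le_abs_self (C * D)]
      _ = c := div_mul_cancel₀ _ (by positivity)
  obtain ⟨S, hS⟩ := eventually_atTop.1 (hg.bound hε)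
  filter_upwards [hu, hKv, eventually_ge_atTop (2 * S), eventually_ge_atTop 0]
    with t hut hKt htS ht0
  have hCu : 0 ≤ C * ‖u t‖ := (norm_nonneg _).trans (hut t (by linarith))
  have hpt : ∀ x ∈ Iic (t / 2), ‖g (t - x)‖ ≤ ε * (C * ‖u t‖) * v (t - x) := by
    intro x hx
    have hs : t / 2 ≤ t - x := by linarith [mem_Iic.1 hx]
    calc ‖g (t - x)‖ ≤ ε * ‖u (t - x) * v (t - x)‖ := hS _ (by linarith)
      _ = ε * ‖u (t - x)‖ * v (t - x) := by
        rw [norm_mul, Real.norm_of_nonneg (hv_nonneg _), mul_assoc]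
      _ ≤ ε * (C * ‖u t‖) * v (t - x) := by
        gcongr
        · exact hv_nonneg _
        · exact hut _ hs
  calc ‖Tops μK g t‖ ≤ ∫ x in Iic (t / 2), ‖g (t - x)‖ ∂μK := norm_integral_le_integral_norm _
    _ ≤ ∫ x in Iic (t / 2), ε * (C * ‖u t‖) * v (t - x) ∂μK :=
        integral_mono_of_nonneg (ae_of_all _ fun _ => norm_nonneg _) ((hv_int t).const_mul _)
          ((ae_restrict_iff' measurableSet_Iic).2 (ae_of_all _ hpt))
    _ = ε * (C * ‖u t‖) * ∫ x in Iic (t / 2), v (t - x) ∂μK := integral_const_mul _ _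
    _ ≤ ε * (C * ‖u t‖) * (D * v t) := by gcongr
    _ = ε * (C * D) * (‖u t‖ * v t) := by ring
    _ ≤ c * ‖u t * v t‖ := by
        rw [norm_mul, Real.norm_of_nonneg (hv_nonneg t)]
        gcongr
        exact mul_nonneg (norm_nonneg _) (hv_nonneg t)

theorem stmt_13_general (μF : Measure ℝ) [IsProbabilityMeasure μF] (h : ℝ → ℝ) (t₀ : ℝ) (m : ℕ)
    (hh : HasHazardRate (fun t => (μF (Set.Iic t)).toReal) h t₀)
    (ρ : ℝ) (hρ : ρ < 0) (hrv : RegularlyVarying h ρ)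
    (hsub : Filter.Tendsto
      (fun t => ((Measure.map (fun p : ℝ × ℝ => p.1 + p.2) (μF.prod μF)) (Set.Ioi t)).toReal
        / (μF (Set.Ioi t)).toReal) Filter.atTop (nhds 2))
    (M : ℝ) (hM : 0 < M) (μK : Measure ℝ) [IsProbabilityMeasure μK]
    (hK : MemB (fun t => (μF (Set.Iic t)).toReal) M μK)
    (g : ℝ → ℝ)
    (hg : Filter.Tendsto (fun t => g t / (h t ^ m * (μF (Set.Ioi t)).toReal))
      Filter.atTop (nhds 0)) :
    Filter.Tendsto (fun t => Tops μK g t / (h t ^ m * (μF (Set.Ioi t)).toReal))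
      Filter.atTop (nhds 0) := by
  have hF_pos : ∀ᶠ t in atTop, 0 < (μF (Ioi t)).toReal :=
    (eventually_ge_atTop t₀).mono fun t ht =>
      one_sub_toReal_measure_Iic μF t ▸ hh.one_sub_pos ht
  obtain ⟨C, hC⟩ := hrv.exists_le_mul_of_half_le hρ hh.2.2.1.aestronglyMeasurable
  have hden : ∀ᶠ t in atTop, 0 < h t ^ m * (μF (Ioi t)).toReal := by
    filter_upwards [hrv.1, hF_pos] with t ht hFt using mul_pos (pow_pos ht m) hFt
  have hiff (f : ℝ → ℝ) := Asymptotics.isLittleO_iff_tendsto' (f := f)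
    (hden.mono fun t ht h0 => absurd h0 ht.ne')
  rw [← hiff] at hg ⊢
  exact isLittleO_Tops (eventually_norm_pow_le_of_half_le hh.2.1 hC m)
    (fun _ => ENNReal.toReal_nonneg)
    (fun t => (integrable_toReal_measure_Ioi_sub μK μF t).integrableOn)
    (hK.eventually_integral_Iic_le hM.le hF_pos hsub) hg

/-- if `F` is subexponential, supported on `[0,∞)`, with regularly varying
hazard rate of negative index satisfying (BasicH), `K ∈ B(F,M)`, and `g = o(h^m F̄)`,
then `T_K g = o(h^m F̄)`. -/
theorem stmt_13 (μF : Measure ℝ) [IsProbabilityMeasure μF] (h : ℝ → ℝ) (t₀ : ℝ) (m : ℕ)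
    (hsupp : μF (Set.Iio 0) = 0)
    (hh : HasHazardRate (fun t => (μF (Set.Iic t)).toReal) h t₀)
    (hb : BasicH h) (ρ : ℝ) (hρ : ρ < 0) (hrv : RegularlyVarying h ρ)
    (hsub : Filter.Tendsto
      (fun t => ((Measure.map (fun p : ℝ × ℝ => p.1 + p.2) (μF.prod μF)) (Set.Ioi t)).toReal
        / (μF (Set.Ioi t)).toReal) Filter.atTop (nhds 2))
    (M : ℝ) (hM : 0 < M) (μK : Measure ℝ) [IsProbabilityMeasure μK]
    (hK : MemB (fun t => (μF (Set.Iic t)).toReal) M μK)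
    (g : ℝ → ℝ) (hgm : Measurable g)
    (hg : Filter.Tendsto (fun t => g t / (h t ^ m * (μF (Set.Ioi t)).toReal))
      Filter.atTop (nhds 0)) :
    Filter.Tendsto (fun t => Tops μK g t / (h t ^ m * (μF (Set.Ioi t)).toReal))
      Filter.atTop (nhds 0) :=
  stmt_13_general μF h t₀ m hh ρ hρ hrv hsub M hM μK hK g hg
end
end

section
/- Let F be a cumulative distribution function with hazard rate h on [t₀,∞). Assume h is regularly varying of index −1 and condition (BasicH) holds. Then for all positive real numbers a, b and c, F̄(t/a)·F̄(t/b) / F̄(t/c) → 0 as t → ∞. -/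
open MeasureTheory Filter Set

noncomputable section

/-!
Write `Λ(t) = ∫_{t₀}^t h`. The ratio equals `F̄(t₀) · exp (-(Λ(t/a) + Λ(t/b) - Λ(t/c)))`, so it
suffices that this exponent tends to `∞`. Since `t h(t) → ∞`, `h(u) ≥ 1/u` eventually and `Λ → ∞`.
Moreover `Λ` is slowly varying. As `h(2v)/h(v) → 1/2`, the increments `D(t) = Λ(2t) - Λ(t)` satisfy
`D(2t) ≤ q D(t)` eventually for every `q > 1`. Then `Λ(2ⁿt)` dominates the sum of the `n` increments
`D(2ᵏt)`, `k < n`, each of which is at least `q⁻ⁿ D(2ⁿt)`; taking `q = 1 + 1/n` gives `D = o(Λ)`,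
hence `Λ(2t)/Λ(t) → 1`, and by monotonicity `Λ(μt)/Λ(t) → 1` for all `μ > 0`. So the exponent is
`Λ(t/b) (1 + o(1)) → ∞`.
-/

open Topology

section Doubling

variable {H : ℝ → ℝ} {q T : ℝ}

lemma le_two_pow_mul_of_le {t : ℝ} (hT : 0 ≤ T) (ht : T ≤ t) (k : ℕ) : T ≤ 2 ^ k * t :=
  ht.trans (le_mul_of_one_le_left (hT.trans ht) (one_le_pow₀ one_le_two))

lemma increment_two_pow_mul_le (hq : 0 ≤ q) (hT : 0 ≤ T)
    (hD : ∀ t, T ≤ t → H (2 * (2 * t)) - H (2 * t) ≤ q * (H (2 * t) - H t))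
    (m : ℕ) {t : ℝ} (ht : T ≤ t) :
    H (2 * (2 ^ m * t)) - H (2 ^ m * t) ≤ q ^ m * (H (2 * t) - H t) := by
  induction m with
  | zero => simp
  | succ m ih =>
    calc H (2 * (2 ^ (m + 1) * t)) - H (2 ^ (m + 1) * t)
        = H (2 * (2 * (2 ^ m * t))) - H (2 * (2 ^ m * t)) := by rw [pow_succ', mul_assoc]
      _ ≤ q * (H (2 * (2 ^ m * t)) - H (2 ^ m * t)) := hD _ (le_two_pow_mul_of_le hT ht m)
      _ ≤ q * (q ^ m * (H (2 * t) - H t)) := by gcongr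
      _ = q ^ (m + 1) * (H (2 * t) - H t) := by ring

lemma natCast_mul_increment_le (hq : 1 ≤ q) (hT : 0 ≤ T) (hmono : MonotoneOn H (Ici T))
    (hHT : 0 ≤ H T)
    (hD : ∀ t, T ≤ t → H (2 * (2 * t)) - H (2 * t) ≤ q * (H (2 * t) - H t))
    (n : ℕ) {t : ℝ} (ht : T ≤ t) :
    n * (H (2 * (2 ^ n * t)) - H (2 ^ n * t)) ≤ q ^ n * H (2 ^ n * t) := by
  have hle (k : ℕ) := le_two_pow_mul_of_le hT ht k
  have hstep : ∀ k ∈ Finset.range n, H (2 * (2 ^ n * t)) - H (2 ^ n * t) ≤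
      q ^ n * (H (2 * (2 ^ k * t)) - H (2 ^ k * t)) := by
    intro k hk
    obtain ⟨m, rfl⟩ := Nat.exists_eq_add_of_le (Finset.mem_range.1 hk).le
    have hinc : 0 ≤ H (2 * (2 ^ k * t)) - H (2 ^ k * t) :=
      sub_nonneg.2 (hmono (hle k) (by rw [← mul_assoc, ← pow_succ']; exact hle (k + 1))
        (le_mul_of_one_le_left (hT.trans (hle k)) one_le_two))
    calc H (2 * (2 ^ (k + m) * t)) - H (2 ^ (k + m) * t)
        = H (2 * (2 ^ m * (2 ^ k * t))) - H (2 ^ m * (2 ^ k * t)) := by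
          rw [pow_add, mul_comm (2 ^ k : ℝ), mul_assoc]
      _ ≤ q ^ m * (H (2 * (2 ^ k * t)) - H (2 ^ k * t)) :=
          increment_two_pow_mul_le (by linarith) hT hD m (hle k)
      _ ≤ q ^ (k + m) * (H (2 * (2 ^ k * t)) - H (2 ^ k * t)) :=
          mul_le_mul_of_nonneg_right (pow_le_pow_right₀ hq (by omega)) hinc
  have htelescope : ∑ k ∈ Finset.range n, (H (2 * (2 ^ k * t)) - H (2 ^ k * t)) =
      H (2 ^ n * t) - H t := by
    simpa [pow_succ', mul_assoc] using Finset.sum_range_sub (fun k => H (2 ^ k * t)) n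
  calc n * (H (2 * (2 ^ n * t)) - H (2 ^ n * t))
      = ∑ k ∈ Finset.range n, (H (2 * (2 ^ n * t)) - H (2 ^ n * t)) := by
        rw [Finset.sum_const, Finset.card_range, nsmul_eq_mul]
    _ ≤ ∑ k ∈ Finset.range n, q ^ n * (H (2 * (2 ^ k * t)) - H (2 ^ k * t)) :=
        Finset.sum_le_sum hstep
    _ = q ^ n * (H (2 ^ n * t) - H t) := by rw [← Finset.mul_sum, htelescope]
    _ ≤ q ^ n * H (2 ^ n * t) := by
        have hHt := hHT.trans (hmono self_mem_Ici ht ht)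
        gcongr
        linarith

lemma one_add_inv_natCast_pow_le_three (n : ℕ) : (1 + (n : ℝ)⁻¹) ^ n ≤ 3 := by
  calc (1 + (n : ℝ)⁻¹) ^ n ≤ Real.exp (n : ℝ)⁻¹ ^ n := by
        gcongr
        linarith [Real.add_one_le_exp (n : ℝ)⁻¹]
    _ ≤ Real.exp 1 := by
        rw [← Real.exp_nat_mul]
        exact Real.exp_le_exp.2 mul_inv_le_one
    _ ≤ 3 := (Real.exp_one_lt_d9.trans (by norm_num)).le

lemma eventually_increment_le_mul (hmono : MonotoneOn H (Ici T))
    (hH : ∀ᶠ t in atTop, 0 ≤ H t)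
    (hD : ∀ q > 1, ∀ᶠ t in atTop, H (2 * (2 * t)) - H (2 * t) ≤ q * (H (2 * t) - H t))
    {ε : ℝ} (hε : 0 < ε) : ∀ᶠ t in atTop, H (2 * t) - H t ≤ ε * H t := by
  obtain ⟨n, hn⟩ := exists_nat_gt (3 / ε)
  have hn0 : (0 : ℝ) < n := (div_pos three_pos hε).trans hn
  have hq : 1 < 1 + (n : ℝ)⁻¹ := lt_add_of_pos_right 1 (inv_pos.2 hn0)
  obtain ⟨T₁, hT₁⟩ := eventually_atTop.1
    ((hD _ hq).and (hH.and (eventually_ge_atTop (max T 0))))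
  have hT₁T : max T 0 ≤ T₁ := (hT₁ T₁ le_rfl).2.2
  have hT₁0 : 0 ≤ T₁ := (le_max_right _ _).trans hT₁T
  filter_upwards [eventually_ge_atTop (2 ^ n * T₁)] with s hs
  have h2n : (0 : ℝ) < 2 ^ n := by positivity
  have hcount := natCast_mul_increment_le hq.le hT₁0
    (hmono.mono (Ici_subset_Ici.2 ((le_max_left _ _).trans hT₁T))) (hT₁ T₁ le_rfl).2.1
    (fun t ht => (hT₁ t ht).1) n (t := s / 2 ^ n) ((le_div_iff₀' h2n).2 hs)
  rw [mul_div_cancel₀ s h2n.ne'] at hcount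
  have hHs : 0 ≤ H s := (hT₁ s ((le_two_pow_mul_of_le hT₁0 le_rfl n).trans hs)).2.1
  have h3 : (n : ℝ) * (H (2 * s) - H s) ≤ 3 * H s :=
    hcount.trans (mul_le_mul_of_nonneg_right (one_add_inv_natCast_pow_le_three n) hHs)
  have hεn : 3 < ε * n := by rwa [div_lt_iff₀ hε, mul_comm] at hn
  nlinarith

lemma tendsto_two_mul_div_of_increment (hmono : MonotoneOn H (Ici T))
    (htop : Tendsto H atTop atTop)
    (hD : ∀ q > 1, ∀ᶠ t in atTop, H (2 * (2 * t)) - H (2 * t) ≤ q * (H (2 * t) - H t)) :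
    Tendsto (fun t => H (2 * t) / H t) atTop (𝓝 1) := by
  have hpos := htop.eventually_gt_atTop 0
  refine tendsto_order.2 ⟨fun a ha => ?_, fun b hb => ?_⟩
  · filter_upwards [hpos, eventually_ge_atTop T, eventually_ge_atTop 0] with t ht htT ht0
    have hmono_t : H t ≤ H (2 * t) := hmono htT (htT.trans (by linarith)) (by linarith)
    rw [lt_div_iff₀ ht]
    nlinarith
  · filter_upwards [hpos, eventually_increment_le_mul hmono (hpos.mono fun _ h => h.le)
      hD (half_pos (sub_pos.2 hb))] with t ht hinc
    rw [div_lt_iff₀ ht]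
    nlinarith

lemma regularlyVarying_zero_of_tendsto_two_mul_div (hmono : MonotoneOn H (Ici T))
    (htop : Tendsto H atTop atTop) (h2 : Tendsto (fun t => H (2 * t) / H t) atTop (𝓝 1)) :
    RegularlyVarying H 0 := by
  have hpos := htop.eventually_gt_atTop 0
  have hscale (c : ℝ) (hc : 0 < c) : Tendsto (fun t => c * t) atTop atTop :=
    tendsto_id.const_mul_atTop hc
  have hpow : ∀ n : ℕ, Tendsto (fun t => H (2 ^ n * t) / H t) atTop (𝓝 1) := by
    intro n
    induction n with
    | zero =>
      refine tendsto_const_nhds.congr' ?_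
      filter_upwards [hpos] with t ht
      simp [ht.ne']
    | succ n ih =>
      have hprod := (h2.comp (hscale _ (by positivity : (0 : ℝ) < 2 ^ n))).mul ih
      rw [mul_one] at hprod
      refine hprod.congr' ?_
      filter_upwards [(hscale _ (by positivity : (0 : ℝ) < 2 ^ n)).eventually hpos] with t ht
      simp only [Function.comp_apply, pow_succ', mul_assoc]
      field_simp
  refine ⟨hpos, fun μ hμ => ?_⟩
  rw [Real.rpow_zero]
  obtain ⟨n, hn⟩ := pow_unbounded_of_one_lt (max μ μ⁻¹) one_lt_two
  have h2n : (0 : ℝ) < 2 ^ n := by positivity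
  have hupper : μ ≤ 2 ^ n := ((le_max_left _ _).trans_lt hn).le
  have hlower : (2 ^ n)⁻¹ ≤ μ := inv_le_of_inv_le₀ hμ ((le_max_right _ _).trans_lt hn).le
  have hlow : Tendsto (fun t => H ((2 ^ n)⁻¹ * t) / H t) atTop (𝓝 1) := by
    have hinv := ((hpow n).comp (hscale _ (inv_pos.2 h2n))).inv₀ one_ne_zero
    rw [inv_one] at hinv
    refine hinv.congr' (Eventually.of_forall fun t => ?_)
    simp only [Function.comp_apply, ← mul_assoc, mul_inv_cancel₀ h2n.ne', one_mul, inv_div]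
  refine tendsto_of_tendsto_of_tendsto_of_le_of_le' hlow (hpow n) ?_ ?_
  · filter_upwards [hpos, (hscale _ (inv_pos.2 h2n)).eventually (eventually_ge_atTop T),
      eventually_ge_atTop 0] with t ht htT ht0
    gcongr
    exact hmono htT (htT.trans (by gcongr)) (by gcongr)
  · filter_upwards [hpos, (hscale _ hμ).eventually (eventually_ge_atTop T),
      eventually_ge_atTop 0] with t ht htT ht0
    gcongr
    exact hmono htT (htT.trans (by gcongr)) (by gcongr)

end Doubling

def integratedHazard (h : ℝ → ℝ) (t₀ t : ℝ) : ℝ := ∫ u in t₀..t, h u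

section IntegratedHazard
variable {h : ℝ → ℝ} {t₀ : ℝ}

lemma intervalIntegrable_of_locallyIntegrableOn_Ici (hloc : LocallyIntegrableOn h (Ici t₀))
    {s t : ℝ} (hs : t₀ ≤ s) (ht : t₀ ≤ t) : IntervalIntegrable h volume s t :=
  (hloc.integrableOn_compact_subset (fun _ hx => (le_inf hs ht).trans hx.1)
    isCompact_uIcc).intervalIntegrable

lemma integratedHazard_sub (hloc : LocallyIntegrableOn h (Ici t₀)) {s t : ℝ}
    (hs : t₀ ≤ s) (ht : t₀ ≤ t) :
    integratedHazard h t₀ t - integratedHazard h t₀ s = ∫ u in s..t, h u :=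
  intervalIntegral.integral_interval_sub_left
    (intervalIntegrable_of_locallyIntegrableOn_Ici hloc le_rfl ht)
    (intervalIntegrable_of_locallyIntegrableOn_Ici hloc le_rfl hs)

lemma monotoneOn_integratedHazard (h0 : ∀ t, t₀ ≤ t → 0 ≤ h t)
    (hloc : LocallyIntegrableOn h (Ici t₀)) :
    MonotoneOn (integratedHazard h t₀) (Ici t₀) := by
  intro s hs t ht hst
  rw [← sub_nonneg, integratedHazard_sub hloc hs ht]
  exact intervalIntegral.integral_nonneg hst fun u hu => h0 u (hs.trans hu.1)

lemma tendsto_integratedHazard_atTop (h0 : ∀ t, t₀ ≤ t → 0 ≤ h t)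
    (hloc : LocallyIntegrableOn h (Ici t₀))
    (hth : Tendsto (fun t => t * h t) atTop atTop) :
    Tendsto (integratedHazard h t₀) atTop atTop := by
  obtain ⟨T, hT⟩ := eventually_atTop.1
    ((hth.eventually_ge_atTop 1).and (eventually_ge_atTop (max t₀ 1)))
  have hTt₀ : t₀ ≤ T := le_of_max_le_left (hT T le_rfl).2
  have hT1 : 1 ≤ T := le_of_max_le_right (hT T le_rfl).2
  refine tendsto_atTop_mono' atTop ?_
    (tendsto_atTop_add_const_right _ (-Real.log T) Real.tendsto_log_atTop)
  filter_upwards [eventually_ge_atTop T] with t ht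
  have hlog : ∫ u in T..t, u⁻¹ = Real.log t - Real.log T := by
    rw [integral_inv_of_pos (by linarith) (by linarith), Real.log_div (by linarith) (by linarith)]
  have hle : ∫ u in T..t, u⁻¹ ≤ ∫ u in T..t, h u := by
    refine intervalIntegral.integral_mono_on ht
      (intervalIntegral.intervalIntegrable_inv (fun x hx => ?_) continuousOn_id)
      (intervalIntegrable_of_locallyIntegrableOn_Ici hloc hTt₀ (hTt₀.trans ht)) fun u hu => ?_
    · rw [uIcc_of_le ht] at hx
      linarith [hx.1]
    · have hu1 : 0 < u := by linarith [hu.1]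
      rw [inv_le_iff_one_le_mul₀ hu1]
      exact mul_comm u (h u) ▸ (hT u hu.1).1
  have hHT : 0 ≤ integratedHazard h t₀ T :=
    intervalIntegral.integral_nonneg hTt₀ fun u hu => h0 u hu.1
  have hsplit := integratedHazard_sub hloc hTt₀ (hTt₀.trans ht)
  linarith

/-- Substituting `u = 2 v` turns the increment over `[2t, 4t]` into one over `[t, 2t]`. -/
lemma eventually_integratedHazard_increment_le (hloc : LocallyIntegrableOn h (Ici t₀))
    (hpos : ∀ᶠ t in atTop, 0 < h t) {r q : ℝ}
    (hratio : Tendsto (fun t => h (2 * t) / h t) atTop (𝓝 r)) (hq : 2 * r < q) :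
    ∀ᶠ t in atTop, integratedHazard h t₀ (2 * (2 * t)) - integratedHazard h t₀ (2 * t) ≤
      q * (integratedHazard h t₀ (2 * t) - integratedHazard h t₀ t) := by
  obtain ⟨T, hT⟩ := eventually_atTop.1
    (((hratio.eventually_lt_const (by linarith : r < q / 2)).and hpos).and
      (eventually_ge_atTop (max t₀ 0)))
  have hbound : ∀ v, T ≤ v → 2 * h (2 * v) ≤ q * h v := by
    intro v hv
    obtain ⟨⟨hlt, hv0⟩, -⟩ := hT v hv
    rw [div_lt_iff₀ hv0] at hlt
    linarith
  filter_upwards [eventually_ge_atTop T] with t ht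
  have htt₀ : t₀ ≤ t := le_of_max_le_left ((hT T le_rfl).2.trans ht)
  have ht0 : 0 ≤ t := le_of_max_le_right ((hT T le_rfl).2.trans ht)
  have h2t : t₀ ≤ 2 * t := htt₀.trans (by linarith)
  have hint : IntervalIntegrable h volume (2 * t) (2 * (2 * t)) :=
    intervalIntegrable_of_locallyIntegrableOn_Ici hloc h2t (h2t.trans (by linarith))
  rw [integratedHazard_sub hloc h2t (h2t.trans (by linarith)), integratedHazard_sub hloc htt₀ h2t]
  calc ∫ u in 2 * t..2 * (2 * t), h u = ∫ v in t..2 * t, 2 * h (2 * v) := by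
        rw [intervalIntegral.integral_const_mul,
          intervalIntegral.integral_comp_mul_left h two_ne_zero, smul_eq_mul,
          mul_inv_cancel_left₀ two_ne_zero]
    _ ≤ ∫ v in t..2 * t, q * h v := by
        refine intervalIntegral.integral_mono_on (by linarith) ?_
          ((intervalIntegrable_of_locallyIntegrableOn_Ici hloc htt₀ h2t).const_mul q)
          fun v hv => hbound v (ht.trans hv.1)
        simpa using (hint.comp_mul_left (c := 2)).const_mul 2
    _ = q * ∫ v in t..2 * t, h v := intervalIntegral.integral_const_mul q _

end IntegratedHazard

lemma regularlyVarying_integratedHazard_zero {h : ℝ → ℝ} {t₀ : ℝ}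
    (h0 : ∀ t, t₀ ≤ t → 0 ≤ h t)
    (hloc : LocallyIntegrableOn h (Ici t₀)) (hrv : RegularlyVarying h (-1))
    (hth : Tendsto (fun t => t * h t) atTop atTop) :
    RegularlyVarying (integratedHazard h t₀) 0 := by
  have hmono := monotoneOn_integratedHazard h0 hloc
  have htop := tendsto_integratedHazard_atTop h0 hloc hth
  refine regularlyVarying_zero_of_tendsto_two_mul_div hmono htop
    (tendsto_two_mul_div_of_increment hmono htop fun q hq => ?_)
  refine eventually_integratedHazard_increment_le hloc hrv.1 (hrv.2 2 two_pos) ?_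
  rw [Real.rpow_neg_one, mul_inv_cancel₀ two_ne_zero]
  exact hq

lemma RegularlyVarying.tendsto_add_sub_atTop {H : ℝ → ℝ} (hH : RegularlyVarying H 0)
    (htop : Tendsto H atTop atTop) {a b c : ℝ} (ha : 0 < a) (hb : 0 < b) (hc : 0 < c) :
    Tendsto (fun t => H (t / a) + H (t / b) - H (t / c)) atTop atTop := by
  have hdiv : Tendsto (fun t => t / b) atTop atTop := tendsto_id.atTop_div_const hb
  have hratio (μ : ℝ) (hμ : 0 < μ) :
      Tendsto (fun t => H (μ * (t / b)) / H (t / b)) atTop (𝓝 1) := by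
    simpa only [Real.rpow_zero, Function.comp_def] using (hH.2 μ hμ).comp hdiv
  have hlim := ((hratio (b / a) (by positivity)).add_const 1).sub (hratio (b / c) (by positivity))
  rw [add_sub_cancel_left] at hlim
  refine ((htop.comp hdiv).atTop_mul_pos one_pos hlim).congr' ?_
  filter_upwards [hdiv.eventually hH.1] with t ht
  have hta : b / a * (t / b) = t / a := by field_simp
  have htc : b / c * (t / b) = t / c := by field_simp
  simp only [Function.comp_apply, hta, htc]
  field_simp

lemma HasHazardRate.tail_mul_tail_div_tail {F h : ℝ → ℝ} {t₀ x y z : ℝ}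
    (hh : HasHazardRate F h t₀) (hx : t₀ ≤ x) (hy : t₀ ≤ y) (hz : t₀ ≤ z) :
    (1 - F x) * (1 - F y) / (1 - F z) = (1 - F t₀) * Real.exp
      (-(integratedHazard h t₀ x + integratedHazard h t₀ y - integratedHazard h t₀ z)) := by
  rw [hh.2.2.2 x hx, hh.2.2.2 y hy, hh.2.2.2 z hz, neg_sub, sub_add_eq_sub_sub, Real.exp_sub,
    Real.exp_sub, Real.exp_neg, Real.exp_neg, Real.exp_neg]
  have hK := hh.1.ne'
  simp only [integratedHazard]
  field_simp

theorem stmt_16_general (F h : ℝ → ℝ) (t₀ : ℝ)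
    (hh : HasHazardRate F h t₀)
    (hrv : RegularlyVarying h (-1)) (hb : BasicH h) :
    ∀ a b c : ℝ, 0 < a → 0 < b → 0 < c →
      Filter.Tendsto (fun t => (1 - F (t / a)) * (1 - F (t / b)) / (1 - F (t / c)))
        Filter.atTop (nhds 0) := by
  intro a b c ha hb' hc
  have h0 := hh.2.1
  have hloc := hh.2.2.1
  have hS := (regularlyVarying_integratedHazard_zero h0 hloc hrv hb.2.1).tendsto_add_sub_atTop
    (tendsto_integratedHazard_atTop h0 hloc hb.2.1) ha hb' hc
  have hlim :=
    (Real.tendsto_exp_atBot.comp (tendsto_neg_atTop_atBot.comp hS)).const_mul (1 - F t₀)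
  rw [mul_zero] at hlim
  refine hlim.congr' ?_
  filter_upwards [(tendsto_id.atTop_div_const ha).eventually_ge_atTop t₀,
    (tendsto_id.atTop_div_const hb').eventually_ge_atTop t₀,
    (tendsto_id.atTop_div_const hc).eventually_ge_atTop t₀] with t hta htb htc
  exact (hh.tail_mul_tail_div_tail hta htb htc).symm

/-- if `h` is regularly varying of index `−1` and (BasicH) holds, then
`F̄(t/a)·F̄(t/b) = o(F̄(t/c))` for all positive `a`, `b`, `c`. -/
theorem stmt_16 (F h : ℝ → ℝ) (t₀ : ℝ) (hF : IsCDF F)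
    (hh : HasHazardRate F h t₀)
    (hrv : RegularlyVarying h (-1)) (hb : BasicH h) :
    ∀ a b c : ℝ, 0 < a → 0 < b → 0 < c →
      Filter.Tendsto (fun t => (1 - F (t / a)) * (1 - F (t / b)) / (1 - F (t / c)))
        Filter.atTop (nhds 0) :=
  stmt_16_general F h t₀ hh hrv hb
end
end

section
/- Let F be a cumulative distribution function with hazard rate h on [t₀,∞) satisfying condition (BasicH), and assume: (i) t·h(t)/log t → 0 as t → ∞; and (ii) limsup_{t→∞} t·h(t)² / h(1/h(t)) < ∞. Let M be a positive number and let K be a cumulative distribution function in B(F,M). Then for all positive real numbers a and b, ( (T_K applied to the function s ↦ F̄(s/a))(t) − F̄(t/a) ) / F̄(t/b) → 0 as t → ∞. -/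
/-!
Write `F̄ = 1 - F`. For `x ≤ t / 2` the integrand `F̄((t - x)/a) - F̄(t/a)` of
`T_K F̄(·/a)(t) - F̄(t/a)` is at most `F̄(t/2a)` in absolute value, and for `|x| ≤ √t` at most
`F̄(t/2a)` times the integral of `h` over a window of length `√t / a` near `t / a`, which is
`O(log t / √t)` because `h(u) ≤ log u / u` eventually. Membership in `B(F,M)` bounds the mass of `K`
on `|x| > √t` and on `x > t / 2` by `2M F̄(√t)` and `M F̄(t/2)`, and these decay faster than any
power of `t` because `t h(t) → ∞`. So the difference is `F̄(t/2a) · o(t^(-1/4))`, while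
`t h(t) = o(log t)` also gives `F̄(t/2a) ≤ F̄(t/b) t^(1/4)`.
-/

open MeasureTheory Filter Set

noncomputable section

namespace IsCDF

variable {F : ℝ → ℝ}

lemma tail_nonneg (hF : IsCDF F) (t : ℝ) : 0 ≤ 1 - F t :=
  sub_nonneg.2 (hF.1.ge_of_tendsto hF.2.2.2 t)

lemma antitone_tail (hF : IsCDF F) : Antitone fun t => 1 - F t :=
  fun _ _ hst => sub_le_sub_left (hF.1 hst) 1

end IsCDF

lemma mul_log_div_le_mul_log_div {ε u V W : ℝ} (hε : 0 ≤ ε) (hV : 1 ≤ V) (hVu : V ≤ u)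
    (huW : u ≤ W) : ε * Real.log u / u ≤ ε * Real.log W / V :=
  div_le_div₀ (mul_nonneg hε (Real.log_nonneg (hV.trans (hVu.trans huW))))
    (mul_le_mul_of_nonneg_left (Real.log_le_log (by linarith) huW) hε) (by linarith) hVu

lemma eventually_le_mul_log_div {h : ℝ → ℝ}
    (hi : Tendsto (fun t => t * h t / Real.log t) atTop (nhds 0)) {ε : ℝ} (hε : 0 < ε) :
    ∀ᶠ u in atTop, h u ≤ ε * Real.log u / u := by
  filter_upwards [hi.eventually_lt_const hε, eventually_gt_atTop 1] with u hu hu1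
  rw [div_lt_iff₀ (Real.log_pos hu1)] at hu
  rw [le_div_iff₀ (one_pos.trans hu1)]
  linarith

namespace HasHazardRate

variable {F h : ℝ → ℝ} {t₀ : ℝ}

lemma intervalIntegrable_s17 (hh : HasHazardRate F h t₀) {s t : ℝ} (hs : t₀ ≤ s) (hst : s ≤ t) :
    IntervalIntegrable h volume s t :=
  (intervalIntegrable_iff_integrableOn_Icc_of_le hst).2 <|
    hh.2.2.1.integrableOn_compact_subset (Icc_subset_Ici_iff hst |>.2 hs) isCompact_Icc

lemma integral_nonneg (hh : HasHazardRate F h t₀) {s t : ℝ} (hs : t₀ ≤ s) (hst : s ≤ t) :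
    0 ≤ ∫ u in s..t, h u :=
  intervalIntegral.integral_nonneg hst fun u hu => hh.2.1 u (hs.trans hu.1)

lemma tail_eq_mul_exp (hh : HasHazardRate F h t₀) {s t : ℝ} (hs : t₀ ≤ s) (hst : s ≤ t) :
    1 - F t = (1 - F s) * Real.exp (-∫ u in s..t, h u) := by
  rw [hh.2.2.2 t (hs.trans hst), hh.2.2.2 s hs, mul_assoc, ← Real.exp_add,
    ← intervalIntegral.integral_add_adjacent_intervals (hh.intervalIntegrable_s17 le_rfl hs)
      (hh.intervalIntegrable_s17 hs hst)]
  ring_nf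

lemma tail_pos (hF : IsCDF F) (hh : HasHazardRate F h t₀) (t : ℝ) : 0 < 1 - F t := by
  rcases le_total t t₀ with ht | ht
  · exact hh.1.trans_le (hF.antitone_tail ht)
  · rw [hh.2.2.2 t ht]
    exact mul_pos hh.1 (Real.exp_pos _)

lemma tail_eq_mul_exp_integral (hh : HasHazardRate F h t₀) {s t : ℝ} (hs : t₀ ≤ s)
    (hst : s ≤ t) : 1 - F s = (1 - F t) * Real.exp (∫ u in s..t, h u) := by
  rw [hh.tail_eq_mul_exp hs hst, mul_assoc, ← Real.exp_add, neg_add_cancel, Real.exp_zero, mul_one]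

/-- Since `u h(u) ≥ B` eventually, `∫ h ≥ B log t`, so the tail decays faster than `t ^ (-B)`
for every `B`. -/
lemma tendsto_tail_mul_rpow (hF : IsCDF F) (hh : HasHazardRate F h t₀)
    (hth : Tendsto (fun t => t * h t) atTop atTop) (A : ℝ) :
    Tendsto (fun t => (1 - F t) * t ^ A) atTop (nhds 0) := by
  obtain ⟨T₁, hT₁⟩ := eventually_atTop.1 (hth.eventually_ge_atTop (A + 1))
  set T := max T₁ (max t₀ 1)
  have hT : 0 < T := lt_of_lt_of_le one_pos (le_max_of_le_right (le_max_right _ _))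
  have hTt₀ : t₀ ≤ T := le_max_of_le_right (le_max_left _ _)
  have hlim := (tendsto_rpow_neg_atTop one_pos).const_mul ((1 - F T) * T ^ (A + 1))
  rw [mul_zero] at hlim
  refine squeeze_zero' ?_ ?_ hlim
  · filter_upwards [eventually_gt_atTop 0] with t ht
    exact mul_nonneg (hF.tail_nonneg t) (Real.rpow_nonneg ht.le A)
  filter_upwards [eventually_ge_atTop T] with t hTt
  have ht : 0 < t := hT.trans_le hTt
  have hlog : (A + 1) * Real.log (t / T) ≤ ∫ u in T..t, h u := by
    rw [← integral_inv_of_pos hT ht, ← intervalIntegral.integral_const_mul]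
    refine intervalIntegral.integral_mono_on hTt
      ((continuousOn_inv₀.mono fun u hu => (hT.trans_le hu.1).ne').intervalIntegrable_of_Icc hTt
        |>.const_mul _) (hh.intervalIntegrable_s17 hTt₀ hTt) fun u hu => ?_
    rw [← div_eq_mul_inv, div_le_iff₀ (hT.trans_le hu.1), mul_comm]
    exact hT₁ u (le_trans (le_max_left _ _) hu.1)
  calc (1 - F t) * t ^ A = (1 - F T) * Real.exp (-∫ u in T..t, h u) * t ^ A := by
        rw [hh.tail_eq_mul_exp hTt₀ hTt]
    _ ≤ (1 - F T) * Real.exp (-((A + 1) * Real.log (t / T))) * t ^ A := by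
        gcongr
        exact hF.tail_nonneg T
    _ = (1 - F T) * T ^ (A + 1) * t ^ (-1 : ℝ) := by
        rw [mul_comm (A + 1), ← mul_neg, ← Real.rpow_def_of_pos (div_pos ht hT),
          Real.div_rpow ht.le hT.le, Real.rpow_neg hT.le, Real.rpow_neg ht.le]
        have : t ^ A = t ^ (A + 1) * t ^ (-1 : ℝ) := by
          rw [← Real.rpow_add ht]; ring_nf
        rw [this, Real.rpow_neg ht.le]
        field_simp

lemma integral_le_mul (hh : HasHazardRate F h t₀) {s t c : ℝ} (hs : t₀ ≤ s) (hst : s ≤ t)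
    (hc : ∀ u ∈ Icc s t, h u ≤ c) : ∫ u in s..t, h u ≤ (t - s) * c := by
  have := intervalIntegral.integral_mono_on hst (hh.intervalIntegrable_s17 hs hst)
    intervalIntegrable_const hc
  rwa [intervalIntegral.integral_const, smul_eq_mul] at this

lemma abs_tail_sub_tail_le_mul (hF : IsCDF F) (hh : HasHazardRate F h t₀) {V W c s t : ℝ}
    (hV : t₀ ≤ V) (hc : ∀ u ∈ Icc V W, h u ≤ c) (hs : s ∈ Icc V W) (ht : t ∈ Icc V W) :
    |(1 - F s) - (1 - F t)| ≤ (1 - F V) * (|t - s| * c) := by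
  wlog hst : s ≤ t generalizing s t
  · rw [abs_sub_comm, abs_sub_comm t]
    exact this ht hs (le_of_not_ge hst)
  have hle : 1 - F t ≤ 1 - F s := hF.antitone_tail hst
  have hs₀ : t₀ ≤ s := hV.trans hs.1
  rw [abs_of_nonneg (sub_nonneg.2 hle), abs_of_nonneg (sub_nonneg.2 hst),
    hh.tail_eq_mul_exp hs₀ hst]
  calc (1 - F s) - (1 - F s) * Real.exp (-∫ u in s..t, h u)
      ≤ (1 - F s) * ∫ u in s..t, h u := by
        nlinarith [Real.one_sub_le_exp_neg (∫ u in s..t, h u), hF.tail_nonneg s]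
    _ ≤ (1 - F V) * ((t - s) * c) :=
        mul_le_mul (hF.antitone_tail hs.1) (hh.integral_le_mul hs₀ hst fun u hu =>
          hc u ⟨hs.1.trans hu.1, hu.2.trans ht.2⟩) (hh.integral_nonneg hs₀ hst)
          (hF.tail_nonneg V)

lemma eventually_tail_le_tail_mul_rpow (hF : IsCDF F) (hh : HasHazardRate F h t₀)
    (hi : Tendsto (fun t => t * h t / Real.log t) atTop (nhds 0)) {c₁ c₂ : ℝ} (hc₁ : 0 < c₁)
    (hc : c₁ ≤ c₂) {ε : ℝ} (hε : 0 < ε) :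
    ∀ᶠ t in atTop, 1 - F (c₁ * t) ≤ (1 - F (c₂ * t)) * t ^ ε := by
  have hc₂ : 0 < c₂ := hc₁.trans_le hc
  set δ := ε * c₁ / (2 * c₂)
  obtain ⟨U, hU⟩ := eventually_atTop.1 (eventually_le_mul_log_div hi (by positivity : 0 < δ))
  filter_upwards [eventually_ge_atTop (max U (max t₀ 1) / c₁), eventually_ge_atTop c₂]
    with t hUt hc₂t
  have ht : 0 < t := hc₂.trans_le hc₂t
  have hs : max U (max t₀ 1) ≤ c₁ * t := by rwa [div_le_iff₀' hc₁] at hUt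
  have hst : c₁ * t ≤ c₂ * t := by gcongr
  have hs₀ : t₀ ≤ c₁ * t := le_trans (le_max_of_le_right (le_max_left _ _)) hs
  have hs₁ : 1 ≤ c₁ * t := le_trans (le_max_of_le_right (le_max_right _ _)) hs
  have hlog : 0 ≤ Real.log (c₂ * t) := Real.log_nonneg (hs₁.trans hst)
  have hint : ∫ u in c₁ * t..c₂ * t, h u ≤ Real.log t * ε := calc
    _ ≤ (c₂ * t - c₁ * t) * (δ * Real.log (c₂ * t) / (c₁ * t)) :=
        hh.integral_le_mul hs₀ hst fun u hu => (hU u (le_trans (le_max_left _ _)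
          (hs.trans hu.1))).trans (mul_log_div_le_mul_log_div (by positivity) hs₁ hu.1 hu.2)
    _ = ε / 2 * ((c₂ - c₁) / c₂) * Real.log (c₂ * t) := by
        simp only [δ]; field_simp
    _ ≤ ε / 2 * 1 * Real.log (c₂ * t) := by
        gcongr
        exact div_le_one_of_le₀ (by linarith) hc₂.le
    _ ≤ Real.log t * ε := by
        rw [Real.log_mul hc₂.ne' ht.ne']
        nlinarith [Real.log_le_log hc₂ hc₂t]
  rw [hh.tail_eq_mul_exp_integral hs₀ hst, Real.rpow_def_of_pos ht]
  exact mul_le_mul_of_nonneg_left (Real.exp_le_exp.2 hint) (hF.tail_nonneg _)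

lemma abs_tail_sub_tail_le_of_abs_le_sqrt {U a t x : ℝ}
    (hF : IsCDF F) (hh : HasHazardRate F h t₀) (ha : 0 < a) (hU₁ : 1 ≤ U) (hU₀ : t₀ ≤ U)
    (hU : ∀ u, U ≤ u → h u ≤ 1 * Real.log u / u) (hUt : U ≤ t / (2 * a)) (ht : 4 ≤ t)
    (hx : |x| ≤ √t) :
    |(1 - F ((t - x) / a)) - (1 - F (t / a))| ≤
      (1 - F (t / (2 * a))) * (2 * Real.log (2 * t / a) / √t) := by
  have ht₀ : 0 < t := by linarith
  have hsqrt : √t ≤ t / 2 := Real.sqrt_le_iff.2 ⟨by linarith, by nlinarith⟩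
  have hone : 1 ≤ t / (2 * a) := hU₁.trans hUt
  have hlog : 0 ≤ Real.log (2 * t / a) := Real.log_nonneg (by
    rw [le_div_iff₀ ha]; rw [le_div_iff₀ (by positivity)] at hone; linarith)
  have hmem : ∀ y, |y| ≤ t / 2 → (t - y) / a ∈ Icc (t / (2 * a)) (2 * t / a) := fun y hy => by
    have := abs_le.1 hy
    constructor
    · rw [div_le_div_iff₀ (by positivity) ha]; nlinarith
    · exact div_le_div_of_nonneg_right (by linarith) ha.le
  calc _ ≤ (1 - F (t / (2 * a))) *
        (|t / a - (t - x) / a| * (1 * Real.log (2 * t / a) / (t / (2 * a)))) :=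
        hh.abs_tail_sub_tail_le_mul hF (hU₀.trans hUt)
          (fun u hu => (hU u (hUt.trans hu.1)).trans
            (mul_log_div_le_mul_log_div zero_le_one hone hu.1 hu.2))
          (hmem x (hx.trans hsqrt)) (by simpa using hmem 0 (by rw [abs_zero]; linarith))
    _ ≤ (1 - F (t / (2 * a))) * (√t / a * (1 * Real.log (2 * t / a) / (t / (2 * a)))) := by
        rw [← sub_div, sub_sub_cancel, abs_div, abs_of_pos ha]
        gcongr
        exact hF.tail_nonneg _
    _ = (1 - F (t / (2 * a))) * (2 * Real.log (2 * t / a) / √t) := by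
        field_simp
        rw [Real.sq_sqrt ht₀.le]
        ring

lemma tendsto_rpow_mul_error (hF : IsCDF F) (hh : HasHazardRate F h t₀)
    (hth : Tendsto (fun t => t * h t) atTop atTop) (M : ℝ) {a : ℝ} (ha : 0 < a) :
    Tendsto (fun t => t ^ (1 / 4 : ℝ) *
      (2 * M * (1 - F √t) + 2 * Real.log (2 * t / a) / √t + M * (1 - F (t / 2)))) atTop
      (nhds 0) := by
  have h₁ : Tendsto (fun t => 2 * M * ((1 - F √t) * √t ^ (1 / 2 : ℝ))) atTop (nhds 0) := by
    simpa using ((hh.tendsto_tail_mul_rpow hF hth _).comp Real.tendsto_sqrt_atTop).const_mul (2 * M)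
  have h₂ : Tendsto (fun t => 2 * (Real.log (2 / a) / t ^ (1 / 4 : ℝ) +
      Real.log t / t ^ (1 / 4 : ℝ))) atTop (nhds 0) := by
    simpa using ((tendsto_const_nhds.div_atTop (tendsto_rpow_atTop (by norm_num))).add
      (isLittleO_log_rpow_atTop (by norm_num : (0 : ℝ) < 1 / 4)).tendsto_div_nhds_zero).const_mul 2
  have h₃ : Tendsto (fun t => M * 2 ^ (1 / 4 : ℝ) * ((1 - F (t / 2)) * (t / 2) ^ (1 / 4 : ℝ)))
      atTop (nhds 0) := by
    simpa using ((hh.tendsto_tail_mul_rpow hF hth _).comp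
      (tendsto_id.atTop_div_const two_pos)).const_mul (M * 2 ^ (1 / 4 : ℝ))
  have hsum := (h₁.add h₂).add h₃
  rw [add_zero, add_zero] at hsum
  refine hsum.congr' ?_
  filter_upwards [eventually_gt_atTop 0] with t ht
  have hsqrt : √t = t ^ (1 / 4 : ℝ) * t ^ (1 / 4 : ℝ) := by
    rw [← Real.rpow_add ht, Real.sqrt_eq_rpow]; norm_num
  have hsqrt' : √t ^ (1 / 2 : ℝ) = t ^ (1 / 4 : ℝ) := by
    rw [Real.sqrt_eq_rpow, ← Real.rpow_mul ht.le]; norm_num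
  have hhalf : (2 : ℝ) ^ (1 / 4 : ℝ) * (t / 2) ^ (1 / 4 : ℝ) = t ^ (1 / 4 : ℝ) := by
    rw [← Real.mul_rpow zero_le_two (by positivity)]; ring_nf
  have hlog : Real.log (2 * t / a) = Real.log (2 / a) + Real.log t := by
    rw [← Real.log_mul (by positivity) ht.ne']; ring_nf
  rw [hsqrt', hlog, hsqrt, ← hhalf]
  field_simp

end HasHazardRate

lemma MemB.measureReal_lt_abs_le {F : ℝ → ℝ} {M : ℝ} {μ : Measure ℝ} [IsFiniteMeasure μ]
    (hK : MemB F M μ) {r : ℝ} (hr : 0 ≤ r) : μ.real {x | r < |x|} ≤ 2 * M * (1 - F r) := by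
  have hsub : {x : ℝ | r < |x|} ⊆ Iic (-r) ∪ Ioi r := fun x hx => by
    rcases lt_abs.1 (show r < |x| from hx) with hx | hx
    · exact Or.inr hx
    · exact Or.inl (show x ≤ -r by linarith)
  calc μ.real {x | r < |x|} ≤ μ.real (Iic (-r)) + μ.real (Ioi r) :=
        (measureReal_mono hsub).trans (measureReal_union_le _ _)
    _ ≤ M * (1 - F r) + M * (1 - F r) := add_le_add (hK r hr).2 (hK r hr).1
    _ = 2 * M * (1 - F r) := by ring

lemma Tops_sub_eq {μ : Measure ℝ} [IsProbabilityMeasure μ] {f : ℝ → ℝ} {t : ℝ}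
    (hf : IntegrableOn (fun x => f (t - x)) (Iic (t / 2)) μ) :
    Tops μ f t - f t = ∫ x in Iic (t / 2), (f (t - x) - f t) ∂μ - f t * μ.real (Ioi (t / 2)) := by
  rw [integral_sub hf (integrable_const _), setIntegral_const, smul_eq_mul,
    ← compl_Iic, measureReal_compl measurableSet_Iic, probReal_univ, Tops]
  ring

lemma abs_Tops_sub_le {μ : Measure ℝ} [IsProbabilityMeasure μ] {f : ℝ → ℝ} (hf : Measurable f)
    {t r A δ : ℝ} (hr : 0 ≤ r) (hA : ∀ x ≤ t / 2, |f (t - x) - f t| ≤ A)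
    (hδ : ∀ x, |x| ≤ r → |f (t - x) - f t| ≤ δ) (hft : |f t| ≤ A) :
    |Tops μ f t - f t| ≤ A * μ.real {x | r < |x|} + δ + A * μ.real (Ioi (t / 2)) := by
  set S := {x : ℝ | r < |x|}
  have hS : MeasurableSet S := measurableSet_lt measurable_const measurable_abs
  have hδ₀ : 0 ≤ δ := (abs_nonneg _).trans (hδ 0 (by simpa using hr))
  have hmeas : AEStronglyMeasurable (fun x => f (t - x) - f t) (μ.restrict (Iic (t / 2))) :=
    ((hf.comp (measurable_const.sub measurable_id)).sub measurable_const).aestronglyMeasurable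
  have hbound : ∀ x ∈ Iic (t / 2), ‖f (t - x) - f t‖ ≤ S.indicator (fun _ => A) x + δ := by
    intro x hx
    rw [Real.norm_eq_abs]
    by_cases hxS : x ∈ S
    · rw [indicator_of_mem hxS]
      linarith [hA x hx]
    · rw [indicator_of_notMem hxS, zero_add]
      exact hδ x (not_lt.1 hxS)
  have hint : Integrable (fun x => S.indicator (fun _ => A) x + δ) μ :=
    ((integrable_const A).indicator hS).add (integrable_const δ)
  have hsub : IntegrableOn (fun x => f (t - x)) (Iic (t / 2)) μ := by
    have hg := Integrable.mono' hint.integrableOn hmeas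
      ((ae_restrict_iff' measurableSet_Iic).2 (ae_of_all _ hbound))
    exact (hg.add (integrable_const (f t))).congr (ae_of_all _ fun x => sub_add_cancel _ _)
  have hA₀ : 0 ≤ A := (abs_nonneg _).trans hft
  have hnorm : |∫ x in Iic (t / 2), (f (t - x) - f t) ∂μ| ≤ A * μ.real S + δ := calc
    _ ≤ ∫ x in Iic (t / 2), (S.indicator (fun _ => A) x + δ) ∂μ :=
        norm_integral_le_of_norm_le hint.integrableOn
          ((ae_restrict_iff' measurableSet_Iic).2 (ae_of_all _ hbound))
    _ ≤ ∫ x, (S.indicator (fun _ => A) x + δ) ∂μ :=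
        setIntegral_le_integral hint
          (ae_of_all _ fun x => add_nonneg (indicator_nonneg (fun _ _ => hA₀) x) hδ₀)
    _ = A * μ.real S + δ := by
        rw [integral_add ((integrable_const A).indicator hS) (integrable_const δ),
          integral_indicator_const _ hS, integral_const, probReal_univ, smul_eq_mul,
          smul_eq_mul, one_mul, mul_comm]
  rw [Tops_sub_eq hsub]
  calc _ ≤ |∫ x in Iic (t / 2), (f (t - x) - f t) ∂μ| + |f t * μ.real (Ioi (t / 2))| :=
        abs_sub _ _
    _ ≤ A * μ.real S + δ + A * μ.real (Ioi (t / 2)) := by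
        rw [abs_mul, abs_of_nonneg measureReal_nonneg]
        gcongr

lemma eventually_abs_Tops_tail_sub_le {F h : ℝ → ℝ} {t₀ M a : ℝ} {μ : Measure ℝ}
    [IsProbabilityMeasure μ] (hF : IsCDF F) (hh : HasHazardRate F h t₀)
    (hi : Tendsto (fun t => t * h t / Real.log t) atTop (nhds 0)) (hK : MemB F M μ)
    (ha : 0 < a) :
    ∀ᶠ t in atTop, |Tops μ (fun s => 1 - F (s / a)) t - (1 - F (t / a))| ≤
      (1 - F (t / (2 * a))) *
        (2 * M * (1 - F √t) + 2 * Real.log (2 * t / a) / √t + M * (1 - F (t / 2))) := by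
  obtain ⟨U₁, hU₁⟩ := eventually_atTop.1 (eventually_le_mul_log_div hi one_pos)
  set U := max U₁ (max t₀ 1)
  filter_upwards [eventually_ge_atTop (2 * a * U), eventually_ge_atTop 4] with t hUt ht4
  have hUt' : U ≤ t / (2 * a) := by rw [le_div_iff₀ (by positivity)]; linarith
  set A := 1 - F (t / (2 * a))
  have hA₀ : 0 ≤ A := hF.tail_nonneg _
  have hmono : ∀ x ≤ t / 2, 1 - F ((t - x) / a) ≤ A := fun x hx =>
    hF.antitone_tail (by rw [div_le_div_iff₀ (by positivity) ha]; nlinarith)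
  refine (abs_Tops_sub_le (f := fun s => 1 - F (s / a))
    (measurable_const.sub (hF.1.measurable.comp (measurable_id.div_const a)))
    (Real.sqrt_nonneg t)
    (fun x hx => abs_sub_le_of_nonneg_of_le (hF.tail_nonneg _) (hmono x hx)
      (hF.tail_nonneg _) (by simpa using hmono 0 (by linarith)))
    (fun x hx => hh.abs_tail_sub_tail_le_of_abs_le_sqrt hF ha
      (le_max_of_le_right (le_max_right _ _)) (le_max_of_le_right (le_max_left _ _))
      (fun u hu => hU₁ u ((le_max_left _ _).trans hu)) hUt' ht4 hx)
    ((abs_of_nonneg (hF.tail_nonneg _)).trans_le (by simpa using hmono 0 (by linarith)))).trans ?_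
  calc _ ≤ A * (2 * M * (1 - F √t)) + A * (2 * Real.log (2 * t / a) / √t)
        + A * (M * (1 - F (t / 2))) := by
        gcongr
        · exact hK.measureReal_lt_abs_le (Real.sqrt_nonneg t)
        · exact (hK (t / 2) (by linarith)).1
    _ = _ := by ring

theorem stmt_17_general (F h : ℝ → ℝ) (t₀ : ℝ) (hF : IsCDF F)
    (hh : HasHazardRate F h t₀) (hb : BasicH h)
    (hi : Filter.Tendsto (fun t => t * h t / Real.log t) Filter.atTop (nhds 0))
    (M : ℝ) (μK : Measure ℝ) [IsProbabilityMeasure μK]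
    (hK : MemB F M μK) :
    ∀ a b : ℝ, 0 < a → 0 < b →
      Filter.Tendsto
        (fun t => (Tops μK (fun s => 1 - F (s / a)) t - (1 - F (t / a))) / (1 - F (t / b)))
        Filter.atTop (nhds 0) := by
  intro a b ha hb'
  set c := min (1 / (2 * a)) (1 / b)
  have hc : 0 < c := lt_min (by positivity) (by positivity)
  refine squeeze_zero_norm' ?_ (hh.tendsto_rpow_mul_error hF hb.2.1 M ha)
  filter_upwards [eventually_abs_Tops_tail_sub_le hF hh hi hK ha,
    hh.eventually_tail_le_tail_mul_rpow hF hi hc (min_le_right _ _) (by norm_num : (0 : ℝ) < 1 / 4),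
    eventually_ge_atTop 0] with t hT hratio ht
  set E := 2 * M * (1 - F √t) + 2 * Real.log (2 * t / a) / √t + M * (1 - F (t / 2))
  have hE : 0 ≤ E := (mul_nonneg_iff_of_pos_left (hh.tail_pos hF _)).1 ((abs_nonneg _).trans hT)
  have hscale : 1 - F (t / (2 * a)) ≤ (1 - F (t / b)) * t ^ (1 / 4 : ℝ) := by
    refine (hF.antitone_tail ?_).trans (by simpa only [one_div_mul_eq_div] using hratio)
    simpa only [one_div_mul_eq_div] using
      mul_le_mul_of_nonneg_right (min_le_left (1 / (2 * a)) (1 / b)) ht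
  have hG := hh.tail_pos hF (t / b)
  rw [norm_div, Real.norm_eq_abs, Real.norm_of_nonneg hG.le, div_le_iff₀ hG]
  calc _ ≤ (1 - F (t / (2 * a))) * E := hT
    _ ≤ (1 - F (t / b)) * t ^ (1 / 4 : ℝ) * E := mul_le_mul_of_nonneg_right hscale hE
    _ = t ^ (1 / 4 : ℝ) * E * (1 - F (t / b)) := by ring

/-- under (BasicH), `t·h(t)/log t → 0` and
`limsup t·h(t)²/h(1/h(t)) < ∞`, for `K ∈ B(F,M)` and positive `a`, `b`,
`(T_K F̄(·/a))(t) − F̄(t/a) = o(F̄(t/b))`. -/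
theorem stmt_17 (F h : ℝ → ℝ) (t₀ : ℝ) (hF : IsCDF F)
    (hh : HasHazardRate F h t₀) (hb : BasicH h)
    (hi : Filter.Tendsto (fun t => t * h t / Real.log t) Filter.atTop (nhds 0))
    (hii : ∃ C : ℝ, ∀ᶠ t in Filter.atTop, t * h t ^ 2 / h (1 / h t) ≤ C)
    (M : ℝ) (hM : 0 < M) (μK : Measure ℝ) [IsProbabilityMeasure μK]
    (hK : MemB F M μK) :
    ∀ a b : ℝ, 0 < a → 0 < b →
      Filter.Tendsto
        (fun t => (Tops μK (fun s => 1 - F (s / a)) t - (1 - F (t / a))) / (1 - F (t / b)))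
        Filter.atTop (nhds 0) :=
  stmt_17_general F h t₀ hF hh hb hi M μK hK
end
end
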